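/- arXiv:1402.2102 — 5 statements merged into one kernel-verified Lean document; each statement's English description precedes it below -/
import Mathlib

section
/- Let R(x,x') be a difference bounds constraint over variables x = {x_1,…,x_N} and primed copies x', and let R_b(x,x') := R(x,x') ∧ ⋀_{(x_i−x_j≤c) a conjunct of R} (x_i'−x_j'≤c) ∧ ⋀_{(x_i'−x_j'≤c) a conjunct of R} (x_i−x_j≤c) be its balanced closure. Then for every n ≥ 0, R ∘ R_b^n ∘ R = R^{n+2} as relations on ℤ^x (where R_b^0 is the identity relation, P^k denotes k-fold relational composition, and (ν,ν') ∈ P∘Q iff there exists μ with (ν,μ) ∈ P and (μ,ν') ∈ Q). -/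
/- ## Difference bounds constraints and their relations -/

/-- Valuations of `N` integer variables. -/
abbrev Val (N : ℕ) := Fin N → ℤ

/-- An atomic proposition `u - v ≤ c` where `u, v` range over the unprimed
(`Sum.inl`) and primed (`Sum.inr`) variables. -/
abbrev Atom (N : ℕ) := (Fin N ⊕ Fin N) × (Fin N ⊕ Fin N) × ℤ

/-- A vertex of an unfolded constraint graph: a position together with a variable. -/
abbrev Vtx (N : ℕ) := ℤ × Fin N

/-- A difference bounds constraint: a finite conjunction of atomic propositions. -/
structure DBC (N : ℕ) where
  atoms : Finset (Atom N)

/-- A path in an unfolded constraint graph: a first vertex followed by a list of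
steps, each carrying a weight and a target vertex. -/
structure UPath (N : ℕ) where
  first : Vtx N
  steps : List (ℤ × Vtx N)

variable {N : ℕ}

def interp (ν ν' : Val N) : Fin N ⊕ Fin N → ℤ
  | Sum.inl i => ν i
  | Sum.inr i => ν' i

/-- The relation on valuations defined by a difference bounds constraint. -/
def DBC.rel (R : DBC N) (ν ν' : Val N) : Prop :=
  ∀ a ∈ R.atoms, interp ν ν' a.1 - interp ν ν' a.2.1 ≤ a.2.2

/-- Relational composition. -/
def relComp (P Q : Val N → Val N → Prop) (ν ν' : Val N) : Prop :=
  ∃ μ, P ν μ ∧ Q μ ν'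

/-- `n`-fold relational composition, with `relPow P 0` the identity relation. -/
def relPow (P : Val N → Val N → Prop) : ℕ → Val N → Val N → Prop
  | 0 => Eq
  | n + 1 => relComp P (relPow P n)

/-- A DB constraint is balanced when `x i - x j ≤ c` is a conjunct iff
`x' i - x' j ≤ c` is a conjunct. -/
def DBC.Balanced (R : DBC N) : Prop :=
  ∀ (i j : Fin N) (c : ℤ),
    (Sum.inl i, Sum.inl j, c) ∈ R.atoms ↔ (Sum.inr i, Sum.inr j, c) ∈ R.atoms

/-- Forward one-directional: every atom is of the form `x i - x' j ≤ c`. -/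
def DBC.IsFw (R : DBC N) : Prop :=
  ∀ a ∈ R.atoms, ∃ (i j : Fin N) (c : ℤ), a = (Sum.inl i, Sum.inr j, c)

/-- Backward one-directional: every atom is of the form `x' i - x j ≤ c`. -/
def DBC.IsBw (R : DBC N) : Prop :=
  ∀ a ∈ R.atoms, ∃ (i j : Fin N) (c : ℤ), a = (Sum.inr i, Sum.inl j, c)

def DBC.IsOneDirectional (R : DBC N) : Prop := R.IsFw ∨ R.IsBw

/- ## Unfolded constraint graphs -/

/-- The endpoint of an atom placed at copy `p` of the unfolding: unprimed
variables live at position `p`, primed ones at position `p + 1`. -/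
def endpt (p : ℤ) : Fin N ⊕ Fin N → Vtx N
  | Sum.inl i => (p, i)
  | Sum.inr i => (p + 1, i)

/-- Edge of the unfolding contributed by copy `p` of the constraint graph. -/
def DBC.EdgeAt (R : DBC N) (p : ℤ) (u v : Vtx N) (c : ℤ) : Prop :=
  ∃ s t, (s, t, c) ∈ R.atoms ∧ u = endpt p s ∧ v = endpt p t

/-- Edge of the bi-infinite unfolding. -/
def DBC.Edge (R : DBC N) (u v : Vtx N) (c : ℤ) : Prop :=
  ∃ p : ℤ, R.EdgeAt p u v c

/-- Edge of the `n`-times unfolding `G_R^n` (copies `0, …, n-1`). -/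
def DBC.EdgeN (R : DBC N) (n : ℕ) (u v : Vtx N) (c : ℤ) : Prop :=
  ∃ p : ℤ, 0 ≤ p ∧ p < (n : ℤ) ∧ R.EdgeAt p u v c

namespace UPath

/-- The list of vertices traversed by a path. -/
def vertices (ρ : UPath N) : List (Vtx N) := ρ.first :: ρ.steps.map Prod.snd

/-- The last vertex of a path. -/
def last (ρ : UPath N) : Vtx N := (ρ.steps.map Prod.snd).getLastD ρ.first

/-- The weight of a path: the sum of its edge weights. -/
def weight (ρ : UPath N) : ℤ := (ρ.steps.map Prod.fst).sum

def posList (ρ : UPath N) : List ℤ := ρ.vertices.map Prod.fst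

/-- The set of positions of the vertices of a path. -/
def posFinset (ρ : UPath N) : Finset ℤ := ρ.posList.toFinset

theorem posFinset_nonempty (ρ : UPath N) : ρ.posFinset.Nonempty := by
  refine ⟨ρ.first.1, ?_⟩
  simp [posFinset, posList, vertices]

/-- The extent of a path: the difference between its maximal and minimal
position. -/
def extent (ρ : UPath N) : ℤ :=
  ρ.posFinset.max' ρ.posFinset_nonempty - ρ.posFinset.min' ρ.posFinset_nonempty

/-- The list of variables traversed by a path. -/
def varList (ρ : UPath N) : List (Fin N) := ρ.vertices.map Prod.snd

/-- The steps form a chain of edges w.r.t. the edge relation `E`. -/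
def EdgeChain (E : Vtx N → Vtx N → ℤ → Prop) : Vtx N → List (ℤ × Vtx N) → Prop
  | _, [] => True
  | u, s :: rest => E u s.2 s.1 ∧ EdgeChain E s.2 rest

/-- The path lies in the bi-infinite unfolding of the constraint graph of `R`. -/
def InUnf (R : DBC N) (ρ : UPath N) : Prop := EdgeChain R.Edge ρ.first ρ.steps

/-- The path lies in the `n`-times unfolding `G_R^n`. -/
def InUnfN (R : DBC N) (n : ℕ) (ρ : UPath N) : Prop :=
  EdgeChain (R.EdgeN n) ρ.first ρ.steps

/-- Concatenation (the caller must ensure `π.first = ρ.last` for this to be a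
genuine path concatenation). -/
def append (ρ π : UPath N) : UPath N := ⟨ρ.first, ρ.steps ++ π.steps⟩

/-- Shift a path by `k` positions. -/
def shift (k : ℤ) (ρ : UPath N) : UPath N :=
  ⟨(ρ.first.1 + k, ρ.first.2), ρ.steps.map fun s => (s.1, (s.2.1 + k, s.2.2))⟩

/-- Concatenation with implicit shifting: `π` is shifted so that its first
vertex is at the position of the last vertex of `ρ`. -/
def glue (ρ π : UPath N) : UPath N := ρ.append (shift (ρ.last.1 - π.first.1) π)

/-- `k`-fold concatenation of a (repeating) path with itself, each copy shifted
so that its first vertex coincides with the last vertex of the previous copy. -/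
def pow (μ : UPath N) : ℕ → UPath N
  | 0 => ⟨μ.first, []⟩
  | k + 1 => (pow μ k).glue μ

def IsVertical (ρ : UPath N) : Prop := ρ.last.1 = ρ.first.1

def IsForward (ρ : UPath N) : Prop := ρ.first.1 < ρ.last.1

def IsBackward (ρ : UPath N) : Prop := ρ.last.1 < ρ.first.1

/-- A path is repeating if its endpoints are copies of the same variable at
different positions. -/
def IsRepeating (ρ : UPath N) : Prop := ρ.first.1 ≠ ρ.last.1 ∧ ρ.first.2 = ρ.last.2

/-- Relative length: the absolute difference of the first and last positions. -/
def relLen (ρ : UPath N) : ℤ := |ρ.last.1 - ρ.first.1|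

/-- Right corner of some extent `d`: a nonempty vertical path whose positions
are exactly `{k, …, k+d}` where `k` is its first (= last) position. -/
def IsRightCorner (ρ : UPath N) : Prop :=
  ρ.steps ≠ [] ∧ ρ.last.1 = ρ.first.1 ∧
  ∃ d : ℕ, ρ.posFinset = Finset.Icc ρ.first.1 (ρ.first.1 + (d : ℤ))

/-- Left corner of some extent `d`: positions exactly `{k−d, …, k}`. -/
def IsLeftCorner (ρ : UPath N) : Prop :=
  ρ.steps ≠ [] ∧ ρ.last.1 = ρ.first.1 ∧
  ∃ d : ℕ, ρ.posFinset = Finset.Icc (ρ.first.1 - (d : ℤ)) ρ.first.1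

def IsCorner (ρ : UPath N) : Prop := ρ.IsRightCorner ∨ ρ.IsLeftCorner

/-- A corner is basic if its start/end position does not occur among the
positions of its intermediate vertices. -/
def IsBasic (ρ : UPath N) : Prop :=
  ∀ s ∈ ρ.steps.dropLast, s.2.1 ≠ ρ.first.1

/-- A long corner: a corner of extent exceeding `N²`. -/
def IsLongCorner (ρ : UPath N) : Prop := ρ.IsCorner ∧ (N : ℤ) ^ 2 < ρ.extent

/-- An lb-corner: a corner that is both long and basic. -/
def IsLBCorner (ρ : UPath N) : Prop := ρ.IsLongCorner ∧ ρ.IsBasic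

/-- `θ` is a (contiguous) subpath of `ρ`. -/
def IsSubpath (θ ρ : UPath N) : Prop :=
  ∃ pre post, ρ.steps = pre ++ θ.steps ++ post ∧ θ.first = (UPath.mk ρ.first pre).last

/-- A path is essential if its traversed variables are pairwise distinct,
except that the first and the last variable may coincide. -/
def IsEssential (ρ : UPath N) : Prop :=
  ∀ (a b : ℕ) (ha : a < ρ.varList.length) (hb : b < ρ.varList.length),
    a < b → ρ.varList.get ⟨a, ha⟩ = ρ.varList.get ⟨b, hb⟩ →
      a = 0 ∧ b = ρ.varList.length - 1

/-- An extremal path of `G_R^n`: both endpoints are at position `0` or `n`. -/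
def IsExtremalIn (n : ℕ) (ρ : UPath N) : Prop :=
  (ρ.first.1 = 0 ∨ ρ.first.1 = (n : ℤ)) ∧ (ρ.last.1 = 0 ∨ ρ.last.1 = (n : ℤ))

/-- `ρ'` is compatible with `ρ`: same first vertex, same last vertex and weight
not greater than that of `ρ`. -/
def Compatible (ρ' ρ : UPath N) : Prop :=
  ρ'.first = ρ.first ∧ ρ'.last = ρ.last ∧ ρ'.weight ≤ ρ.weight

/-- A path in `G_R^n` is normalized if none of its subpaths traversing only
positions in `{N², …, n−N²}` is a long corner. -/
def IsNormalized (n : ℕ) (ρ : UPath N) : Prop :=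
  ∀ θ : UPath N, θ.IsSubpath ρ →
    θ.posFinset ⊆ Finset.Icc ((N : ℤ) ^ 2) ((n : ℤ) - (N : ℤ) ^ 2) →
    ¬ θ.IsLongCorner

end UPath

/- ## UPath schemes -/

/-- `σ.λ*.σ'` is a path scheme: `λ` is empty or an essential repeating path,
the variables match up for concatenation, and `σ.λ.σ'` is a non-empty path. -/
def IsSchemeTriple (σ lam σ' : UPath N) : Prop :=
  (lam.steps = [] ∨ (lam.IsEssential ∧ lam.IsRepeating)) ∧
  lam.first.2 = σ.last.2 ∧ σ'.first.2 = lam.last.2 ∧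
  (σ.glue (lam.glue σ')).steps ≠ []

/-- The element `σ.λ^m.σ'` of the set of paths denoted by the scheme `σ.λ*.σ'`. -/
def schemeElem (σ lam σ' : UPath N) (m : ℕ) : UPath N :=
  σ.glue ((lam.pow m).glue σ')

/-- Shape of the `λ` component of a scheme of the class `Π_{ijkpq}`:
a path `x_k^(0) → … → x_k^(p)` of length `p` in the unfolding. -/
def LamShape (R : DBC N) (k : Fin N) (p : ℕ) (lam : UPath N) : Prop :=
  lam.InUnf R ∧ lam.first = ((0 : ℤ), k) ∧ lam.last = ((p : ℤ), k) ∧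
  lam.steps.length = p

/-- Shape of the `σ, σ'` components of a scheme of the class `Π_{ijkpq}`:
`σ : x_i^(0) → … → x_k^(r)` and `σ' : x_k^(r) → … → x_j^(q)` for some
`0 ≤ r ≤ q`, with `|σ.σ'| = q`. -/
def SigmaShape (R : DBC N) (i j k : Fin N) (q : ℕ) (σ σ' : UPath N) : Prop :=
  ∃ r : ℕ, r ≤ q ∧ σ.InUnf R ∧ σ'.InUnf R ∧
    σ.first = ((0 : ℤ), i) ∧ σ.last = ((r : ℤ), k) ∧
    σ'.first = ((r : ℤ), k) ∧ σ'.last = ((q : ℤ), j) ∧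
    σ.steps.length + σ'.steps.length = q

/-- Membership of the scheme `σ.λ*.σ'` in the class `Π_{ijkpq}`. -/
def InPi (R : DBC N) (i j k : Fin N) (p q : ℕ) (σ lam σ' : UPath N) : Prop :=
  IsSchemeTriple σ lam σ' ∧ LamShape R k p lam ∧ SigmaShape R i j k q σ σ'

/-- The set `S_ij` of quadruples `(|σ.σ'|, |λ|, w(σ.σ'), w(λ))` arising from the
minimal representative schemes `θ_{ijkpq}` of the nonempty classes `Π_{ijkpq}`. -/
def Sset (R : DBC N) (i j : Fin N) : Set (ℕ × ℕ × ℤ × ℤ) :=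
  { t | ∃ (k : Fin N) (p q : ℕ) (σ lam σ' : UPath N),
      p ≤ N ∧ q ≤ N ^ 4 ∧ 0 < p + q ∧
      (∃ ν μ ν' : UPath N, InPi R i j k p q ν μ ν') ∧
      LamShape R k p lam ∧
      (∀ lam', LamShape R k p lam' → lam.weight ≤ lam'.weight) ∧
      SigmaShape R i j k q σ σ' ∧
      (∀ σ₁ σ₁', SigmaShape R i j k q σ₁ σ₁' →
        σ.weight + σ'.weight ≤ σ₁.weight + σ₁'.weight) ∧
      t = (q, p, σ.weight + σ'.weight, lam.weight) }

/- ## Segments -/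

/-- An edge from `u` to `v` has both endpoints at positions within `{p, …, q}`. -/
def StepInRange (p q : ℤ) (u v : Vtx N) : Prop :=
  p ≤ u.1 ∧ u.1 ≤ q ∧ p ≤ v.1 ∧ v.1 ≤ q

/-- `ξ` is an element of `segments(ρ, p, q)`: a nonempty maximal subpath of `ρ`
whose positions lie within `{p, …, q}`, immediately preceded and followed (if at
all) by edges not lying within `{p, …, q}`. -/
def IsSegmentOf (ρ : UPath N) (p q : ℤ) (ξ : UPath N) : Prop :=
  ξ.steps ≠ [] ∧
  ∃ pre post, ρ.steps = pre ++ ξ.steps ++ post ∧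
    ξ.first = (UPath.mk ρ.first pre).last ∧
    ξ.posFinset ⊆ Finset.Icc p q ∧
    (∀ pre' c u, pre = pre' ++ [(c, u)] →
      ¬ StepInRange p q (UPath.mk ρ.first pre').last u) ∧
    (∀ c v post', post = (c, v) :: post' → ¬ StepInRange p q ξ.last v)

/- ## The strengthened relation and one-directional approximations -/

/-- `S_fw`: the valuations `ν` such that `∃ ν'. (ν,ν') ∈ R^{N²}`. -/
def Sfw (R : DBC N) (ν : Val N) : Prop := ∃ ν', relPow R.rel (N ^ 2) ν ν'

/-- `S_bw`: the valuations `ν'` such that `∃ ν. (ν,ν') ∈ R^{N²}`. -/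
def Sbw (R : DBC N) (ν' : Val N) : Prop := ∃ ν, relPow R.rel (N ^ 2) ν ν'

/-- The strengthened relation `R_s = R ∧ S_fw(x) ∧ S_bw(x')`. -/
def Rs (R : DBC N) (ν ν' : Val N) : Prop := R.rel ν ν' ∧ Sfw R ν ∧ Sbw R ν'

/-- `R_fw`: the strongest forward one-directional DB relation implied by `R_s`. -/
def Rfw (R : DBC N) (ν ν' : Val N) : Prop :=
  ∀ (i j : Fin N) (c : ℤ), (∀ μ μ', Rs R μ μ' → μ i - μ' j ≤ c) → ν i - ν' j ≤ c

/-- `R_bw`: the strongest backward one-directional DB relation implied by `R_s`. -/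
def Rbw (R : DBC N) (ν ν' : Val N) : Prop :=
  ∀ (i j : Fin N) (c : ℤ), (∀ μ μ', Rs R μ μ' → μ' i - μ j ≤ c) → ν' i - ν j ≤ c

/- ## Corner decompositions -/

/-- The pumped path `η.μ^k.τ.μ'^k.η'`. -/
def pumped (η μ τ μ' η' : UPath N) (k : ℕ) : UPath N :=
  η.glue ((μ.pow k).glue (τ.glue ((μ'.pow k).glue η')))

/-- The decomposition `ρ' = η.μ.τ.μ'.η'` of a right corner as in the corner
shortening / decomposition lemma. -/
def DecompRight (ρ' : UPath N) : Prop :=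
  ∃ η μ τ μ' η' : UPath N,
    ρ' = η.append (μ.append (τ.append (μ'.append η'))) ∧
    μ.first = η.last ∧ τ.first = μ.last ∧ μ'.first = τ.last ∧ η'.first = μ'.last ∧
    μ.IsForward ∧ μ.IsRepeating ∧ μ'.IsBackward ∧ μ'.IsRepeating ∧
    τ.IsRightCorner ∧
    η.relLen = η'.relLen ∧
    1 ≤ μ.relLen ∧ μ.relLen = μ'.relLen ∧ μ.relLen ≤ (N : ℤ) ^ 2 ∧
    μ.weight + μ'.weight < 0 ∧
    ∀ k : ℕ,
      (pumped η μ τ μ' η' k).IsRightCorner ∧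
      (∀ θ : UPath N, θ.IsSubpath (η.glue (μ.pow k)) → ¬ θ.IsLBCorner) ∧
      (∀ θ : UPath N, θ.IsSubpath ((μ'.pow k).glue η') → ¬ θ.IsLBCorner)

/-- The decomposition `ρ' = η.μ.τ.μ'.η'` of a left corner as in the corner
shortening / decomposition lemma. -/
def DecompLeft (ρ' : UPath N) : Prop :=
  ∃ η μ τ μ' η' : UPath N,
    ρ' = η.append (μ.append (τ.append (μ'.append η'))) ∧
    μ.first = η.last ∧ τ.first = μ.last ∧ μ'.first = τ.last ∧ η'.first = μ'.last ∧
    μ.IsBackward ∧ μ.IsRepeating ∧ μ'.IsForward ∧ μ'.IsRepeating ∧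
    τ.IsLeftCorner ∧
    η.relLen = η'.relLen ∧
    1 ≤ μ.relLen ∧ μ.relLen = μ'.relLen ∧ μ.relLen ≤ (N : ℤ) ^ 2 ∧
    μ.weight + μ'.weight < 0 ∧
    ∀ k : ℕ,
      (pumped η μ τ μ' η' k).IsLeftCorner ∧
      (∀ θ : UPath N, θ.IsSubpath (η.glue (μ.pow k)) → ¬ θ.IsLBCorner) ∧
      (∀ θ : UPath N, θ.IsSubpath ((μ'.pow k).glue η') → ¬ θ.IsLBCorner)

/- ## Balanced closure -/

/-- Swap an unprimed-unprimed atom with its primed-primed counterpart. -/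
def flipAtom : Atom N → Atom N
  | (Sum.inl i, Sum.inl j, c) => (Sum.inr i, Sum.inr j, c)
  | (Sum.inr i, Sum.inr j, c) => (Sum.inl i, Sum.inl j, c)
  | a => a

/-- The balanced closure `R_b` of a DB constraint `R`. -/
def DBC.balClosure (R : DBC N) : DBC N := ⟨R.atoms ∪ R.atoms.image flipAtom⟩

theorem rel_of_balRel {N : ℕ} {R : DBC N} {a b : Val N}
    (h : R.balClosure.rel a b) : R.rel a b := by
  intro atom hatom
  exact h atom (Finset.mem_union_left _ hatom)

theorem bal_rel_of_chain {N : ℕ} {R : DBC N} {a b c d : Val N}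
    (hab : R.rel a b) (hbc : R.rel b c) (hcd : R.rel c d) :
    R.balClosure.rel b c := by
  intro atom hatom
  rcases Finset.mem_union.mp hatom with h | h
  · exact hbc atom h
  · rcases Finset.mem_image.mp h with ⟨a', ha', rfl⟩
    rcases a' with ⟨u, v, k⟩
    rcases u with i | i <;> rcases v with j | j <;>
      simp only [flipAtom, interp]
    · exact hcd _ ha'
    · exact hbc _ ha'
    · exact hbc _ ha'
    · exact hab _ ha'

theorem relPow_mono {N : ℕ} {P Q : Val N → Val N → Prop}
    (h : ∀ a b, P a b → Q a b) :
    ∀ n a b, relPow P n a b → relPow Q n a b := by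
  intro n
  induction n with
  | zero => intro a b hh; exact hh
  | succ m ih =>
    rintro a b ⟨μ, h1, h2⟩
    exact ⟨μ, h a μ h1, ih μ b h2⟩

theorem balPow_first_step {N : ℕ} {R : DBC N} {a b c : Val N} :
    ∀ n, relPow R.balClosure.rel n a b → R.rel b c → ∃ w, R.rel a w
  | 0, h, hbc => by subst h; exact ⟨c, hbc⟩
  | n + 1, ⟨μ, h1, _⟩, _ => ⟨μ, rel_of_balRel h1⟩

theorem pow_to_bal {N : ℕ} {R : DBC N} :
    ∀ n (ν ν' : Val N), relPow R.rel (n + 2) ν ν' →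
      ∃ μ₁ μ₂, R.rel ν μ₁ ∧ relPow R.balClosure.rel n μ₁ μ₂ ∧ R.rel μ₂ ν' := by
  intro n
  induction n with
  | zero =>
    rintro ν ν' ⟨μ, h1, μ', h2, h3⟩
    subst h3
    exact ⟨μ, μ, h1, rfl, h2⟩
  | succ m ih =>
    rintro ν ν' ⟨a, hνa, hrest⟩
    obtain ⟨μ₁, μ₂, h1, h2, h3⟩ := ih a ν' hrest
    obtain ⟨w, hw⟩ := balPow_first_step m h2 h3
    exact ⟨a, μ₂, hνa, ⟨μ₁, bal_rel_of_chain hνa h1 hw, h2⟩, h3⟩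

/-- For a DB constraint `R` with balanced closure `R_b`,
`R ∘ R_b^n ∘ R = R^{n+2}` for every `n ≥ 0`. -/
theorem statement0 (N : ℕ) (hN : 1 ≤ N) (R : DBC N) (n : ℕ) :
    relComp R.rel (relComp (relPow R.balClosure.rel n) R.rel) =
      relPow R.rel (n + 2) := by
  funext ν ν'
  apply propext
  constructor
  · rintro ⟨μ₁, h1, μ₂, h2, h3⟩
    have h2' : relPow R.rel n μ₁ μ₂ :=
      relPow_mono (fun a b h => rel_of_balRel h) n μ₁ μ₂ h2
    clear h2
    -- build R^{n+2} : R ν μ₁, then R^n μ₁ μ₂, then R μ₂ ν'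
    refine ⟨μ₁, h1, ?_⟩
    clear h1
    induction n generalizing μ₁ with
    | zero => subst h2'; exact ⟨ν', h3, rfl⟩
    | succ m ih =>
      obtain ⟨w, hw1, hw2⟩ := h2'
      exact ⟨w, hw1, ih w hw2⟩
  · intro h
    obtain ⟨μ₁, μ₂, h1, h2, h3⟩ := pow_to_bal n ν ν' h
    exact ⟨μ₁, h1, μ₂, h2, h3⟩
end

section
/- Let R(x,x') be a one-directional difference bounds constraint over N variables, let n ≥ 1, and let ρ be an extremal path in the n-times unfolding G_R^n. Then there exist a path ρ' compatible with ρ (same first vertex, same last vertex, and w(ρ') ≤ w(ρ)) and a biquadratic path scheme σ.λ*.σ' such that ρ' ∈ ⟦σ.λ*.σ'⟧. -/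
variable {N : ℕ}

/-!
In the unfolding of a one-directional relation every edge moves by the same `d = ±1` positions,
so a path of `G_R^n` is a walk in the weighted graph on the variables laid out at consecutive
positions, and every walk of the same length from the same start lies in `G_R^n` as well.

For a walk longer than `N⁴`, choose among the simple cycles on its vertices one, `C`, of minimal
mean weight, and split the walk at a visit of its base. By pigeonhole, each part of length at least
`|C| N` contains a closed subwalk whose length is a multiple of `|C|`. Closed walks decompose into
simple cycles, so cutting it out and inserting as many copies of `C` at the base keeps the length
and does not increase the weight. Both parts end up shorter than `|C| N ≤ N²`, and
`2 (N² - 1) ≤ N⁴`.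
-/

open scoped Nat

lemma exists_min_ratio {ι : Type*} {P : ι → Prop} {w : ι → ℤ} {len : ι → ℕ} {K : ℕ} {B : ℤ}
    (hlen : ∀ x, P x → 0 < len x ∧ len x ≤ K) (hB : ∀ x, P x → B * len x ≤ w x)
    (hne : ∃ x, P x) : ∃ x, P x ∧ ∀ y, P y → w x * len y ≤ w y * len x := by
  -- clearing the denominators by `K!` turns the ratios into integers bounded below
  have hK : ∀ x, P x → (len x : ℤ) * ((K ! / len x : ℕ) : ℤ) = K ! := fun x hx => by
    exact_mod_cast Nat.mul_div_cancel' (Nat.dvd_factorial (hlen x hx).1 (hlen x hx).2)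
  obtain ⟨z, ⟨x, hx, rfl⟩, hmin⟩ := Int.exists_least_of_bdd
    (P := fun z => ∃ x, P x ∧ z = w x * (K ! / len x : ℕ))
    ⟨B * K !, by
      rintro _ ⟨x, hx, rfl⟩
      rw [← hK x hx, ← mul_assoc]
      exact mul_le_mul_of_nonneg_right (hB x hx) (by positivity)⟩
    (let ⟨x, hx⟩ := hne; ⟨_, x, hx, rfl⟩)
  refine ⟨x, hx, fun y hy => ?_⟩
  have hxy := mul_le_mul_of_nonneg_right (hmin _ ⟨y, hy, rfl⟩)
    (by positivity : (0 : ℤ) ≤ len x * len y)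
  have hfac : (0 : ℤ) < K ! := by exact_mod_cast K.factorial_pos
  have e₁ := hK x hx
  have e₂ := hK y hy
  refine le_of_mul_le_mul_right ?_ hfac
  calc w x * len y * K ! = w x * (K ! / len x : ℕ) * (len x * len y) := by rw [← e₁]; ring
    _ ≤ w y * (K ! / len y : ℕ) * (len x * len y) := hxy
    _ = w y * len x * K ! := by rw [← e₂]; ring

namespace Walk

variable {V : Type*}

/-- A walk from a vertex `u` is encoded by its list of steps `(weight, target)`. -/
def target (u : V) : List (ℤ × V) → V
  | [] => u
  | s :: l => target s.2 l

def IsWalk (E : V → V → ℤ → Prop) : V → List (ℤ × V) → Prop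
  | _, [] => True
  | u, s :: l => E u s.2 s.1 ∧ IsWalk E s.2 l

def weight (l : List (ℤ × V)) : ℤ := (l.map Prod.fst).sum

def vertices (u : V) (l : List (ℤ × V)) : List V := u :: l.map Prod.snd

def IsSimpleCycle (E : V → V → ℤ → Prop) (u : V) (C : List (ℤ × V)) : Prop :=
  C ≠ [] ∧ IsWalk E u C ∧ target u C = u ∧ (vertices u C).dropLast.Nodup

variable {E : V → V → ℤ → Prop} {u : V}

@[simp] lemma target_nil (u : V) : target u [] = u := rfl

@[simp] lemma target_cons (u : V) (s : ℤ × V) (l : List (ℤ × V)) :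
    target u (s :: l) = target s.2 l := rfl

lemma target_append (u : V) (X Y : List (ℤ × V)) :
    target u (X ++ Y) = target (target u X) Y := by
  induction X generalizing u <;> simp_all

@[simp] lemma isWalk_nil (u : V) : IsWalk E u [] := trivial

@[simp] lemma isWalk_cons (s : ℤ × V) (l : List (ℤ × V)) :
    IsWalk E u (s :: l) ↔ E u s.2 s.1 ∧ IsWalk E s.2 l := Iff.rfl

lemma isWalk_append {X Y : List (ℤ × V)} :
    IsWalk E u (X ++ Y) ↔ IsWalk E u X ∧ IsWalk E (target u X) Y := by
  induction X generalizing u <;> simp_all [and_assoc]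

@[simp] lemma weight_nil : weight ([] : List (ℤ × V)) = 0 := rfl

@[simp] lemma weight_cons (s : ℤ × V) (l : List (ℤ × V)) : weight (s :: l) = s.1 + weight l := by
  simp [weight]

@[simp] lemma weight_append (X Y : List (ℤ × V)) : weight (X ++ Y) = weight X + weight Y := by
  simp [weight]

lemma vertices_append (u : V) (X Y : List (ℤ × V)) :
    vertices u (X ++ Y) = vertices u X ++ Y.map Prod.snd := by
  simp [vertices]

lemma target_mem_vertices (u : V) (l : List (ℤ × V)) : target u l ∈ vertices u l := by
  induction l generalizing u with
  | nil => simp [vertices]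
  | cons s l ih => exact List.mem_cons_of_mem _ (ih s.2)

lemma vertices_suffix (u : V) (X Y : List (ℤ × V)) :
    vertices (target u X) Y <:+ vertices u (X ++ Y) := by
  induction X generalizing u with
  | nil => exact List.suffix_refl _
  | cons s X ih => exact (ih s.2).trans (List.suffix_cons u _)

lemma exists_eq_append_of_mem_vertices {v : V} {l : List (ℤ × V)} (h : v ∈ vertices u l) :
    ∃ X Y, l = X ++ Y ∧ target u X = v := by
  induction l generalizing u with
  | nil => exact ⟨[], [], rfl, (List.mem_singleton.1 h).symm⟩
  | cons s l ih =>
    rcases List.mem_cons.1 h with rfl | h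
    · exact ⟨[], s :: l, rfl, rfl⟩
    · obtain ⟨X, Y, rfl, hX⟩ := ih h
      exact ⟨s :: X, Y, rfl, hX⟩

lemma exists_isSimpleCycle_of_not_nodup {l : List (ℤ × V)} (hl : IsWalk E u l)
    (hnd : ¬ (vertices u l).Nodup) :
    ∃ X C Z, l = X ++ C ++ Z ∧ IsSimpleCycle E (target u X) C := by
  induction l using List.reverseRecOn with
  | nil => simp [vertices] at hnd
  | append_singleton l s ih =>
    have hl' := isWalk_append.1 hl
    by_cases hnd' : (vertices u l).Nodup
    · have hs : s.2 ∈ vertices u l := by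
        by_contra hs
        exact hnd (by simpa [vertices_append] using hnd'.concat hs)
      obtain ⟨X, Y, rfl, hX⟩ := exists_eq_append_of_mem_vertices hs
      have hXY := isWalk_append.1 hl'.1
      refine ⟨X, Y ++ [s], [], by simp, by simp, ?_, ?_, ?_⟩
      · exact isWalk_append.2 ⟨hXY.2, by rw [← target_append]; exact hl'.2⟩
      · simp [target_append, hX]
      · rw [vertices_append, List.map_singleton, List.dropLast_concat]
        exact hnd'.sublist (vertices_suffix u X Y).sublist
    · obtain ⟨X, C, Z, rfl, hC⟩ := ih hl'.1 hnd'
      exact ⟨X, C, Z ++ [s], by simp, hC⟩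

lemma IsSimpleCycle.length_le [Fintype V] {C : List (ℤ × V)} (hC : IsSimpleCycle E u C) :
    C.length ≤ Fintype.card V := by
  simpa [vertices] using hC.2.2.2.length_le_card

lemma mul_length_le_weight {B : ℤ} (hB : ∀ i j w, E i j w → B ≤ w) {l : List (ℤ × V)}
    (hl : IsWalk E u l) : B * l.length ≤ weight l := by
  induction l generalizing u with
  | nil => simp
  | cons s l ih =>
    have := hB _ _ _ hl.1
    have := ih hl.2
    simp only [List.length_cons, weight_cons]
    push_cast
    linarith

lemma isWalk_delete {X C Z : List (ℤ × V)} (h : IsWalk E u (X ++ C ++ Z))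
    (hC : target (target u X) C = target u X) :
    IsWalk E u (X ++ Z) ∧ target u (X ++ Z) = target u (X ++ C ++ Z) := by
  rw [List.append_assoc, isWalk_append, isWalk_append, hC] at h
  refine ⟨isWalk_append.2 ⟨h.1, h.2.2⟩, ?_⟩
  simp only [target_append, hC]

lemma vertices_delete_subset (u : V) (X C Z : List (ℤ × V)) :
    vertices u (X ++ Z) ⊆ vertices u (X ++ C ++ Z) := by
  intro v
  simp only [vertices_append, List.mem_append, List.mem_map]
  tauto

lemma vertices_infix_subset (u : V) (X C Z : List (ℤ × V)) :
    vertices (target u X) C ⊆ vertices u (X ++ C ++ Z) := fun _ hv => by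
  rw [vertices_append]
  exact List.mem_append_left _ ((vertices_suffix u X C).subset hv)

lemma mul_length_le_of_isClosed {S : List V} {a : ℤ} {c : ℕ}
    (hcyc : ∀ k Y, IsSimpleCycle E k Y → vertices k Y ⊆ S → a * Y.length ≤ weight Y * c)
    {Y : List (ℤ × V)} (hY : IsWalk E u Y) (hclosed : target u Y = u) (hS : vertices u Y ⊆ S) :
    a * Y.length ≤ weight Y * c := by
  induction hn : Y.length using Nat.strong_induction_on generalizing Y with
  | _ n ih =>
  subst hn
  rcases Y with _ | ⟨s, Y⟩
  · simp
  have hnd : ¬ (vertices u (s :: Y)).Nodup := by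
    rw [vertices, List.nodup_cons, not_and_or, not_not]
    exact Or.inl (hclosed ▸ target_mem_vertices s.2 Y)
  obtain ⟨X, C, Z, hXCZ, hC⟩ := exists_isSimpleCycle_of_not_nodup hY hnd
  rw [hXCZ] at hY hclosed hS ih ⊢
  obtain ⟨hXZ, htarget⟩ := isWalk_delete hY hC.2.2.1
  have hlen : (X ++ Z).length < (X ++ C ++ Z).length := by
    simpa using List.length_pos_iff.2 hC.1
  have h₁ := ih _ hlen hXZ (htarget.trans hclosed)
    (fun _ hv => hS (vertices_delete_subset u X C Z hv)) rfl
  have h₂ := hcyc _ C hC fun _ hv => hS (vertices_infix_subset u X C Z hv)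
  simp only [List.length_append, weight_append] at h₁ h₂ ⊢
  push_cast at h₁ h₂ ⊢
  linarith

@[simp] lemma length_vertices (u : V) (l : List (ℤ × V)) :
    (vertices u l).length = l.length + 1 := by
  simp [vertices]

lemma getElem_vertices_length (u : V) (l : List (ℤ × V)) :
    (vertices u l)[l.length]'(by simp) = target u l := by
  induction l generalizing u with
  | nil => rfl
  | cons s l ih => exact ih s.2

lemma IsSimpleCycle.eq_zero_and_eq_of_getElem_eq {C : List (ℤ × V)} (hC : IsSimpleCycle E u C)
    {a b : ℕ} (hb : b < (vertices u C).length) (hab : a < b)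
    (h : (vertices u C)[a] = (vertices u C)[b]) : a = 0 ∧ b = C.length := by
  have hlen := length_vertices u C
  have hinj : ∀ i j (hi : i < C.length) (hj : j < C.length),
      (vertices u C)[i] = (vertices u C)[j] → i = j := fun i j hi hj hij =>
    (hC.2.2.2.getElem_inj_iff (hi := by simpa) (hj := by simpa)).1
      (by simpa only [List.getElem_dropLast] using hij)
  have hends : (vertices u C)[C.length] = (vertices u C)[0] :=
    (getElem_vertices_length u C).trans hC.2.2.1
  have hbC : b = C.length := by
    by_contra hbC
    exact hab.ne (hinj a b (by omega) (by omega) h)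
  subst hbC
  exact ⟨hinj a 0 hab (by omega) (h.trans hends), rfl⟩

/-- Pigeonhole on the pairs (vertex after `i` steps, `i mod c`) for `i ≤ c * |V|`. -/
lemma exists_closed_infix [Fintype V] {c : ℕ} (hc : 0 < c) {l : List (ℤ × V)}
    (hl : c * Fintype.card V ≤ l.length) :
    ∃ X Y Z, l = X ++ Y ++ Z ∧ Y ≠ [] ∧ c ∣ Y.length ∧ target (target u X) Y = target u X := by
  classical
  obtain ⟨i, hi, j, hj, hij, heq⟩ := Finset.exists_ne_map_eq_of_card_lt_of_maps_to
    (s := Finset.range (c * Fintype.card V + 1)) (t := Finset.univ ×ˢ Finset.range c)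
    (f := fun i => (target u (l.take i), i % c)) (by simp [mul_comm])
    (fun i _ => by simp [Nat.mod_lt _ hc])
  wlog hlt : i < j generalizing i j
  · exact this j hj i hi hij.symm heq.symm (by omega)
  simp only [Finset.mem_range, Prod.mk.injEq] at hj heq
  have htake : l.take i ++ (l.take j).drop i = l.take j := by
    conv_rhs => rw [← List.take_append_drop i (l.take j)]
    rw [List.take_take, Nat.min_eq_left hlt.le]
  refine ⟨l.take i, (l.take j).drop i, l.drop j, ?_, ?_, ?_, ?_⟩
  · rw [htake, List.take_append_drop]
  · rw [← List.length_pos_iff, List.length_drop, List.length_take]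
    omega
  · rw [List.length_drop, List.length_take, Nat.min_eq_left (by omega)]
    exact Nat.dvd_of_mod_eq_zero (Nat.sub_mod_eq_zero_of_mod_eq heq.2.symm)
  · rw [← target_append, htake, heq.1]

lemma exists_short_walk [Fintype V] {S : List V} {a : ℤ} {c : ℕ} (hc : 0 < c)
    (hclosed : ∀ k Y, IsWalk E k Y → target k Y = k → vertices k Y ⊆ S →
      a * Y.length ≤ weight Y * c)
    {l : List (ℤ × V)} (hl : IsWalk E u l) (hS : vertices u l ⊆ S) :
    ∃ l' : List (ℤ × V), ∃ q : ℕ, IsWalk E u l' ∧ target u l' = target u l ∧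
      l'.length < c * Fintype.card V ∧ l'.length + q * c = l.length ∧
      weight l' + q * a ≤ weight l := by
  induction hn : l.length using Nat.strong_induction_on generalizing l with
  | _ n ih =>
  subst hn
  by_cases hshort : l.length < c * Fintype.card V
  · exact ⟨l, 0, hl, rfl, hshort, by simp, by simp⟩
  obtain ⟨X, Y, Z, rfl, hY, ⟨r, hr⟩, hYclosed⟩ := exists_closed_infix (u := u) hc (not_lt.1 hshort)
  obtain ⟨hXZ, htarget⟩ := isWalk_delete hl hYclosed
  have hlen : (X ++ Z).length < (X ++ Y ++ Z).length := by
    simpa using List.length_pos_iff.2 hY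
  obtain ⟨l', q, hl', hl'target, hl'short, hl'len, hl'weight⟩ :=
    ih _ hlen hXZ (fun _ hv => hS (vertices_delete_subset u X Y Z hv)) rfl
  have hYwalk := (isWalk_append.1 (isWalk_append.1 hl).1).2
  have hYmean : r * a ≤ weight Y := by
    have h := hclosed _ Y hYwalk hYclosed fun _ hv => hS (vertices_infix_subset u X Y Z hv)
    rw [hr, Nat.cast_mul] at h
    exact le_of_mul_le_mul_right (by linarith) (by exact_mod_cast hc : (0 : ℤ) < c)
  refine ⟨l', q + r, hl', hl'target.trans htarget, hl'short, ?_, ?_⟩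
  · simp only [List.length_append, hr] at hl'len ⊢
    linarith
  · simp only [weight_append] at hl'weight ⊢
    push_cast
    linarith

lemma exists_min_mean_simpleCycle [Fintype V] {B : ℤ} (hB : ∀ i j w, E i j w → B ≤ w)
    {l : List (ℤ × V)} (hl : IsWalk E u l) (hnd : ¬ (vertices u l).Nodup) :
    ∃ k C, IsSimpleCycle E k C ∧ k ∈ vertices u l ∧
      ∀ k' Y, IsWalk E k' Y → target k' Y = k' → vertices k' Y ⊆ vertices u l →
        weight C * Y.length ≤ weight Y * C.length := by
  obtain ⟨X, C₀, Z, rfl, hC₀⟩ := exists_isSimpleCycle_of_not_nodup hl hnd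
  obtain ⟨⟨k, C⟩, ⟨hC, hCl⟩, hmin⟩ := exists_min_ratio
    (P := fun x : V × List (ℤ × V) =>
      IsSimpleCycle E x.1 x.2 ∧ vertices x.1 x.2 ⊆ vertices u (X ++ C₀ ++ Z))
    (w := fun x => weight x.2) (len := fun x => x.2.length) (K := Fintype.card V) (B := B)
    (fun x hx => ⟨List.length_pos_iff.2 hx.1.1, hx.1.length_le⟩)
    (fun x hx => mul_length_le_weight hB hx.1.2.1)
    ⟨(target u X, C₀), hC₀, vertices_infix_subset u X C₀ Z⟩
  exact ⟨k, C, hC, hCl List.mem_cons_self, fun k' Y hY hclosed hS =>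
    mul_length_le_of_isClosed (fun k'' Y' hY' hS' => hmin (k'', Y') ⟨hY', hS'⟩) hY hclosed hS⟩

def pump (P C S : List (ℤ × V)) (m : ℕ) : List (ℤ × V) := P ++ (List.replicate m C).flatten ++ S

lemma isWalk_flatten_replicate {C : List (ℤ × V)} (hC : IsWalk E u C) (hclosed : target u C = u)
    (m : ℕ) :
    IsWalk E u (List.replicate m C).flatten ∧ target u (List.replicate m C).flatten = u := by
  induction m with
  | zero => simp
  | succ m ih =>
    rw [List.replicate_succ, List.flatten_cons, isWalk_append, target_append, hclosed]
    exact ⟨⟨hC, ih.1⟩, ih.2⟩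

lemma weight_flatten_replicate (C : List (ℤ × V)) (m : ℕ) :
    weight (List.replicate m C).flatten = m * weight C := by
  induction m with
  | zero => simp
  | succ m ih => rw [List.replicate_succ, List.flatten_cons, weight_append, ih]; push_cast; ring

theorem exists_pump_le [Fintype V] (hE : BddBelow {w | ∃ i j, E i j w}) {l : List (ℤ × V)}
    (hl : IsWalk E u l) :
    ∃ (P C S : List (ℤ × V)) (m : ℕ),
      (C = [] ∨ IsSimpleCycle E (target u P) C) ∧ P.length + S.length ≤ Fintype.card V ^ 4 ∧
      IsWalk E u (pump P C S m) ∧ target u (pump P C S m) = target u l ∧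
      (pump P C S m).length = l.length ∧ weight (pump P C S m) ≤ weight l := by
  set N := Fintype.card V
  by_cases hshort : l.length ≤ N ^ 4
  · exact ⟨l, [], [], 0, Or.inl rfl, by simpa using hshort, by simpa [pump] using hl,
      by simp [pump], by simp [pump], by simp [pump]⟩
  have hnd : ¬ (vertices u l).Nodup := fun h => by
    have hcard := h.length_le_card
    have hN := Nat.le_self_pow (by norm_num : 4 ≠ 0) N
    rw [length_vertices] at hcard
    omega
  obtain ⟨B, hB⟩ := hE
  obtain ⟨k, C, hC, hk, hmin⟩ :=
    exists_min_mean_simpleCycle (fun i j w h => hB ⟨i, j, h⟩) hl hnd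
  have hc : 0 < C.length := List.length_pos_iff.2 hC.1
  obtain ⟨P₀, S₀, rfl, rfl⟩ := exists_eq_append_of_mem_vertices hk
  obtain ⟨hP₀, hS₀⟩ := isWalk_append.1 hl
  obtain ⟨P, q₁, hP, hPtarget, hPshort, hPlen, hPweight⟩ := exists_short_walk hc hmin hP₀
    (vertices_append u P₀ S₀ ▸ List.subset_append_left _ _)
  obtain ⟨S, q₂, hS, hStarget, hSshort, hSlen, hSweight⟩ := exists_short_walk hc hmin hS₀
    (vertices_suffix u P₀ S₀).subset
  have hCpow := isWalk_flatten_replicate hC.2.1 hC.2.2.1 (q₁ + q₂)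
  refine ⟨P, C, S, q₁ + q₂, Or.inr (hPtarget ▸ hC), ?_, ?_, ?_, ?_, ?_⟩
  · have hCN : C.length * Fintype.card V ≤ N ^ 2 := by
      rw [sq]; exact Nat.mul_le_mul_right N hC.length_le
    have hN : 2 * N ^ 2 ≤ N ^ 4 + 1 := by zify; nlinarith [sq_nonneg ((N : ℤ) ^ 2 - 1)]
    omega
  · simp only [pump, List.append_assoc, isWalk_append, hPtarget, hCpow.2]
    exact ⟨hP, hCpow.1, hS⟩
  · simp only [pump, target_append, hPtarget, hCpow.2, hStarget]
  · simp only [pump, List.length_append, List.length_flatten, List.map_replicate,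
      List.sum_replicate, smul_eq_mul]
    linarith
  · simp only [pump, weight_append, weight_flatten_replicate]
    push_cast
    linarith

end Walk

namespace UPath

variable {R : DBC N} {n : ℕ} {d : ℤ} {E : Fin N → Fin N → ℤ → Prop}

def liftSteps (d : ℤ) : ℤ → List (ℤ × Fin N) → List (ℤ × Vtx N)
  | _, [] => []
  | p, s :: l => (s.1, (p + d, s.2)) :: liftSteps d (p + d) l

/-- The path of the unfolding that follows the walk `l` from `u`, starting at position `p` and
moving by `d` positions per step. -/
def lift (d p : ℤ) (u : Fin N) (l : List (ℤ × Fin N)) : UPath N := ⟨(p, u), liftSteps d p l⟩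

@[simp] lemma liftSteps_nil (d p : ℤ) : liftSteps d p ([] : List (ℤ × Fin N)) = [] := rfl

@[simp] lemma liftSteps_cons (d p : ℤ) (s : ℤ × Fin N) (l : List (ℤ × Fin N)) :
    liftSteps d p (s :: l) = (s.1, (p + d, s.2)) :: liftSteps d (p + d) l := rfl

@[simp] lemma length_liftSteps (d p : ℤ) (l : List (ℤ × Fin N)) :
    (liftSteps d p l).length = l.length := by
  induction l generalizing p <;> simp_all

@[simp] lemma liftSteps_eq_nil {d p : ℤ} {l : List (ℤ × Fin N)} :
    liftSteps d p l = [] ↔ l = [] := by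
  cases l <;> simp

lemma liftSteps_append (d p : ℤ) (X Y : List (ℤ × Fin N)) :
    liftSteps d p (X ++ Y) = liftSteps d p X ++ liftSteps d (p + d * X.length) Y := by
  induction X generalizing p with
  | nil => simp
  | cons s X ih =>
    simp only [List.cons_append, liftSteps_cons, ih, List.length_cons]
    push_cast
    ring_nf

@[simp] lemma lift_first (d p : ℤ) (u : Fin N) (l : List (ℤ × Fin N)) :
    (lift d p u l).first = (p, u) := rfl

@[simp] lemma lift_steps (d p : ℤ) (u : Fin N) (l : List (ℤ × Fin N)) :
    (lift d p u l).steps = liftSteps d p l := rfl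

lemma lift_last (d p : ℤ) (u : Fin N) (l : List (ℤ × Fin N)) :
    (lift d p u l).last = (p + d * l.length, Walk.target u l) := by
  induction l generalizing p u with
  | nil => simp [lift, last]
  | cons s l ih =>
    have := ih (p + d) s.2
    simp only [lift, last, liftSteps_cons, List.map_cons, List.getLastD_cons] at this ⊢
    rw [this]
    simp only [List.length_cons, Walk.target_cons]
    push_cast
    ring_nf

lemma lift_weight (d p : ℤ) (u : Fin N) (l : List (ℤ × Fin N)) :
    (lift d p u l).weight = Walk.weight l := by
  induction l generalizing p <;> simp_all [lift, weight, Walk.weight]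

lemma lift_varList (d p : ℤ) (u : Fin N) (l : List (ℤ × Fin N)) :
    (lift d p u l).varList = Walk.vertices u l := by
  simp only [lift, varList, vertices, Walk.vertices, List.map_cons, List.map_map, List.cons.injEq,
    true_and]
  induction l generalizing p <;> simp_all

lemma shift_lift (k d p : ℤ) (u : Fin N) (l : List (ℤ × Fin N)) :
    shift k (lift d p u l) = lift d (p + k) u l := by
  simp only [shift, lift, mk.injEq, true_and]
  induction l generalizing p with
  | nil => rfl
  | cons s l ih => simp only [liftSteps_cons, List.map_cons, ih]; ring_nf

lemma lift_glue_lift (d p q : ℤ) (u v : Fin N) (X Y : List (ℤ × Fin N)) :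
    (lift d p u X).glue (lift d q v Y) = lift d p u (X ++ Y) := by
  rw [glue, lift_last, lift_first, shift_lift, add_sub_cancel]
  simp only [append, lift, liftSteps_append]

lemma lift_pow (d p : ℤ) (u : Fin N) (C : List (ℤ × Fin N)) (m : ℕ) :
    (lift d p u C).pow m = lift d p u (List.replicate m C).flatten := by
  induction m with
  | zero => rfl
  | succ m ih => rw [pow, ih, lift_glue_lift, List.replicate_succ', List.flatten_append]; simp

lemma schemeElem_lift (d p q r : ℤ) (u v w : Fin N) (P C S : List (ℤ × Fin N)) (m : ℕ) :
    schemeElem (lift d p u P) (lift d q v C) (lift d r w S) m = lift d p u (Walk.pump P C S m) := by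
  rw [schemeElem, lift_pow, lift_glue_lift, lift_glue_lift, Walk.pump, List.append_assoc]

lemma isEssential_lift {k : Fin N} {C : List (ℤ × Fin N)} (hC : Walk.IsSimpleCycle E k C)
    (p : ℤ) : (lift d p k C).IsEssential := by
  intro a b ha hb hab h
  simp only [lift_varList, List.get_eq_getElem] at ha hb h ⊢
  simpa using hC.eq_zero_and_eq_of_getElem_eq hb hab h

lemma isRepeating_lift (hd : d ≠ 0) {k : Fin N} {C : List (ℤ × Fin N)}
    (hC : Walk.IsSimpleCycle E k C) (p : ℤ) : (lift d p k C).IsRepeating := by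
  have hlen : (C.length : ℤ) ≠ 0 := by simpa using hC.1
  refine ⟨?_, by simp [lift_last, hC.2.2.1]⟩
  simpa [lift_last] using mul_ne_zero hd hlen

lemma isSchemeTriple_lift (hd : d ≠ 0) (p q r : ℤ) {u : Fin N} {P C S : List (ℤ × Fin N)}
    (hC : C = [] ∨ Walk.IsSimpleCycle E (Walk.target u P) C) (hne : P ++ C ++ S ≠ []) :
    IsSchemeTriple (lift d p u P) (lift d q (Walk.target u P) C)
      (lift d r (Walk.target u P) S) := by
  have hclosed : Walk.target (Walk.target u P) C = Walk.target u P := by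
    rcases hC with rfl | hC
    · rfl
    · exact hC.2.2.1
  refine ⟨?_, by simp [lift_last], by simp [lift_last, hclosed], ?_⟩
  · rcases hC with rfl | hC
    · exact Or.inl rfl
    · exact Or.inr ⟨isEssential_lift hC q, isRepeating_lift hd hC q⟩
  · simpa [lift_glue_lift] using hne

lemma compatible_lift (p : ℤ) (u : Fin N) {F l : List (ℤ × Fin N)} (hlen : F.length = l.length)
    (htarget : Walk.target u F = Walk.target u l) (hweight : Walk.weight F ≤ Walk.weight l) :
    (lift d p u F).Compatible (lift d p u l) :=
  ⟨rfl, by rw [lift_last, lift_last, hlen, htarget], by rwa [lift_weight, lift_weight]⟩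


lemma eq_liftSteps_of_edgeChain (hstep : ∀ v v' w, R.EdgeN n v v' w → v'.1 = v.1 + d)
    {v : Vtx N} {steps : List (ℤ × Vtx N)} (h : EdgeChain (R.EdgeN n) v steps) :
    steps = liftSteps d v.1 (steps.map fun s => (s.1, s.2.2)) := by
  induction steps generalizing v with
  | nil => rfl
  | cons s steps ih =>
    rw [List.map_cons, liftSteps_cons, ← hstep _ _ _ h.1, ← ih h.2]

lemma inUnfN_lift_iff {lo hi : ℤ}
    (hedge : ∀ p i j w, R.EdgeN n (p, i) (p + d, j) w ↔ (lo ≤ p ∧ p ≤ hi) ∧ E i j w)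
    {p : ℤ} {u : Fin N} {l : List (ℤ × Fin N)} :
    (lift d p u l).InUnfN R n ↔
      Walk.IsWalk E u l ∧ ∀ k < l.length, lo ≤ p + d * k ∧ p + d * k ≤ hi := by
  induction l generalizing p u with
  | nil => simp [InUnfN, EdgeChain]
  | cons s l ih =>
    change R.EdgeN n (p, u) (p + d, s.2) s.1 ∧ (lift d (p + d) s.2 l).InUnfN R n ↔ _
    simp only [hedge, ih, Walk.isWalk_cons, List.length_cons, Nat.forall_lt_succ_left',
      Nat.cast_add, Nat.cast_one, Nat.cast_zero, mul_zero, add_zero, mul_add, mul_one, add_assoc,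
      add_comm d]
    tauto

end UPath

namespace DBC

variable {R : DBC N} {n : ℕ}

/-- The edges `x_i → x'_j` of the constraint graph, as a graph on the variables. -/
def fwEdge (R : DBC N) (i j : Fin N) (w : ℤ) : Prop := (Sum.inl i, Sum.inr j, w) ∈ R.atoms

/-- The edges `x'_i → x_j` of the constraint graph, as a graph on the variables. -/
def bwEdge (R : DBC N) (i j : Fin N) (w : ℤ) : Prop := (Sum.inr i, Sum.inl j, w) ∈ R.atoms

lemma bddBelow_weights (R : DBC N) : BddBelow {w | ∃ s t, (s, t, w) ∈ R.atoms} :=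
  (R.atoms.image fun a => a.2.2).bddBelow.mono fun _ ⟨_, _, h⟩ =>
    Finset.mem_coe.2 (Finset.mem_image_of_mem _ h)

lemma IsFw.edgeN_fst {v v' : Vtx N} {w : ℤ} (hR : R.IsFw) (h : R.EdgeN n v v' w) :
    v'.1 = v.1 + 1 := by
  obtain ⟨q, -, -, s, t, hmem, rfl, rfl⟩ := h
  obtain ⟨i, j, c, hst⟩ := hR _ hmem
  simp only [Prod.mk.injEq] at hst
  rw [hst.1, hst.2.1]
  rfl

lemma IsBw.edgeN_fst {v v' : Vtx N} {w : ℤ} (hR : R.IsBw) (h : R.EdgeN n v v' w) :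
    v'.1 = v.1 + -1 := by
  obtain ⟨q, -, -, s, t, hmem, rfl, rfl⟩ := h
  obtain ⟨i, j, c, hst⟩ := hR _ hmem
  simp only [Prod.mk.injEq] at hst
  rw [hst.1, hst.2.1]
  simp [endpt]

lemma edgeN_add_one_iff {p w : ℤ} {i j : Fin N} :
    R.EdgeN n (p, i) (p + 1, j) w ↔ (0 ≤ p ∧ p ≤ n - 1) ∧ R.fwEdge i j w := by
  constructor
  · rintro ⟨q, hq₀, hqn, s, t, hmem, hs, ht⟩
    cases s <;> cases t <;> simp only [endpt, Prod.mk.injEq] at hs ht <;> try omega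
    obtain ⟨rfl, rfl⟩ := hs
    obtain ⟨-, rfl⟩ := ht
    exact ⟨⟨hq₀, by omega⟩, hmem⟩
  · rintro ⟨⟨hp₀, hpn⟩, h⟩
    exact ⟨p, hp₀, by omega, Sum.inl i, Sum.inr j, h, rfl, rfl⟩

lemma edgeN_add_neg_one_iff {p w : ℤ} {i j : Fin N} :
    R.EdgeN n (p, i) (p + -1, j) w ↔ (1 ≤ p ∧ p ≤ n) ∧ R.bwEdge i j w := by
  constructor
  · rintro ⟨q, hq₀, hqn, s, t, hmem, hs, ht⟩
    cases s <;> cases t <;> simp only [endpt, Prod.mk.injEq] at hs ht <;> try omega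
    obtain ⟨rfl, rfl⟩ := hs
    obtain ⟨-, rfl⟩ := ht
    exact ⟨⟨by omega, by omega⟩, hmem⟩
  · rintro ⟨⟨hp₁, hpn⟩, h⟩
    exact ⟨p - 1, by omega, by omega, Sum.inr i, Sum.inl j, h, by simp [endpt],
      by simp [endpt, sub_eq_add_neg]⟩

lemma exists_lift_of_edgeN {d lo hi : ℤ} {E : Fin N → Fin N → ℤ → Prop}
    (hstep : ∀ v v' w, R.EdgeN n v v' w → v'.1 = v.1 + d)
    (hedge : ∀ p i j w, R.EdgeN n (p, i) (p + d, j) w ↔ (lo ≤ p ∧ p ≤ hi) ∧ E i j w)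
    {ρ : UPath N} (hρ : ρ.InUnfN R n) :
    ∃ (p : ℤ) (u : Fin N) (l : List (ℤ × Fin N)), ρ = UPath.lift d p u l ∧ Walk.IsWalk E u l ∧
      ∀ l', Walk.IsWalk E u l' → l'.length = l.length → (UPath.lift d p u l').InUnfN R n := by
  obtain ⟨⟨p, u⟩, steps⟩ := ρ
  have hρl : (⟨(p, u), steps⟩ : UPath N) = UPath.lift d p u (steps.map fun s => (s.1, s.2.2)) :=
    congrArg (UPath.mk (p, u)) (UPath.eq_liftSteps_of_edgeChain hstep hρ)
  rw [hρl, UPath.inUnfN_lift_iff hedge] at hρ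
  exact ⟨p, u, _, hρl, hρ.1,
    fun l' hl' hlen => (UPath.inUnfN_lift_iff hedge).2 ⟨hl', hlen ▸ hρ.2⟩⟩

theorem IsOneDirectional.exists_lift (hR : R.IsOneDirectional) {ρ : UPath N}
    (hρ : ρ.InUnfN R n) :
    ∃ (d : ℤ) (E : Fin N → Fin N → ℤ → Prop), d ≠ 0 ∧ BddBelow {w | ∃ i j, E i j w} ∧
      ∃ (p : ℤ) (u : Fin N) (l : List (ℤ × Fin N)), ρ = UPath.lift d p u l ∧ Walk.IsWalk E u l ∧
        ∀ l', Walk.IsWalk E u l' → l'.length = l.length → (UPath.lift d p u l').InUnfN R n := by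
  rcases hR with hR | hR
  · exact ⟨1, R.fwEdge, one_ne_zero,
      R.bddBelow_weights.mono (by rintro _ ⟨_, _, h⟩; exact ⟨_, _, h⟩),
      exists_lift_of_edgeN (fun _ _ _ => hR.edgeN_fst) (fun _ _ _ _ => edgeN_add_one_iff) hρ⟩
  · exact ⟨-1, R.bwEdge, by norm_num,
      R.bddBelow_weights.mono (by rintro _ ⟨_, _, h⟩; exact ⟨_, _, h⟩),
      exists_lift_of_edgeN (fun _ _ _ => hR.edgeN_fst) (fun _ _ _ _ => edgeN_add_neg_one_iff) hρ⟩

end DBC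

theorem statement1_general (N : ℕ) (R : DBC N) (hR : R.IsOneDirectional)
    (n : ℕ) (ρ : UPath N) (hρ : ρ.InUnfN R n)
    (hne : ρ.steps ≠ []) :
    ∃ (σ lam σ' : UPath N) (m : ℕ),
      IsSchemeTriple σ lam σ' ∧
      σ.steps.length + σ'.steps.length ≤ N ^ 4 ∧
      (schemeElem σ lam σ' m).InUnfN R n ∧
      (schemeElem σ lam σ' m).Compatible ρ := by
  obtain ⟨d, E, hd, hE, p, u, l, rfl, hl, hlift⟩ := hR.exists_lift hρ
  obtain ⟨P, C, S, m, hC, hPS, hF, hFtarget, hFlen, hFweight⟩ := Walk.exists_pump_le hE hl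
  have hPCS : P ++ C ++ S ≠ [] := by
    rintro h
    simp only [List.append_eq_nil_iff] at h
    obtain ⟨⟨rfl, rfl⟩, rfl⟩ := h
    simp [Walk.pump, eq_comm] at hFlen
    simp [hFlen] at hne
  refine ⟨UPath.lift d p u P, UPath.lift d 0 (Walk.target u P) C,
    UPath.lift d 0 (Walk.target u P) S, m, UPath.isSchemeTriple_lift hd p 0 0 hC hPCS,
    by simpa using hPS, ?_, ?_⟩ <;> rw [UPath.schemeElem_lift]
  · exact hlift _ hF hFlen
  · exact UPath.compatible_lift p u hFlen hFtarget hFweight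

/-- For a one-directional DB constraint `R`, every extremal
path in `G_R^n` has a compatible path that is an instance of a biquadratic
path scheme. -/
theorem statement1 (N : ℕ) (hN : 1 ≤ N) (R : DBC N) (hR : R.IsOneDirectional)
    (n : ℕ) (hn : 1 ≤ n) (ρ : UPath N) (hρ : ρ.InUnfN R n)
    (hne : ρ.steps ≠ []) (hext : ρ.IsExtremalIn n) :
    ∃ (σ lam σ' : UPath N) (m : ℕ),
      IsSchemeTriple σ lam σ' ∧
      σ.steps.length + σ'.steps.length ≤ N ^ 4 ∧
      (schemeElem σ lam σ' m).InUnfN R n ∧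
      (schemeElem σ lam σ' m).Compatible ρ :=
  statement1_general N R hR n ρ hρ hne
end

section
/- Let R be a forward one-directional difference bounds constraint over N variables, fix 1 ≤ i,j,k ≤ N and p, q ≥ 0 with p+q > 0, and suppose Π_{ijkpq} ≠ ∅. Let λ be a path of minimal weight among all paths of the form x_k^(0) →…→ x_k^(p) of length p in unfoldings of G_R, and let σ, σ' be such that σ.σ' has minimal weight among all paths of the form σ : x_i^(0) →…→ x_k^(r), σ' : x_k^(r) →…→ x_j^(q) with 0 ≤ r ≤ q and |σ.σ'| = q. Then for every path scheme ν.μ*.ν' ∈ Π_{ijkpq} and every n ≥ 0, w(σ) + n·w(λ) + w(σ') ≤ w(ν) + n·w(μ) + w(ν'). -/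
variable {N : ℕ}

/-- The representative scheme built from a minimal-weight `λ`
and a minimal-weight `σ.σ'` is minimal in its class `Π_{ijkpq}`. -/
theorem statement2 (N : ℕ) (hN : 1 ≤ N) (R : DBC N) (hR : R.IsFw)
    (i j k : Fin N) (p q : ℕ) (hpq : 0 < p + q)
    (hne : ∃ ν μ ν' : UPath N, InPi R i j k p q ν μ ν')
    (lam σ σ' : UPath N)
    (hlam : LamShape R k p lam)
    (hlamMin : ∀ lam', LamShape R k p lam' → lam.weight ≤ lam'.weight)
    (hσ : SigmaShape R i j k q σ σ')
    (hσMin : ∀ σ₁ σ₁', SigmaShape R i j k q σ₁ σ₁' →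
      σ.weight + σ'.weight ≤ σ₁.weight + σ₁'.weight) :
    ∀ ν μ ν' : UPath N, InPi R i j k p q ν μ ν' → ∀ n : ℕ,
      σ.weight + (n : ℤ) * lam.weight + σ'.weight ≤
        ν.weight + (n : ℤ) * μ.weight + ν'.weight := by
  rintro ν μ ν' ⟨_, hμ, hνν'⟩ n
  have h1 := hlamMin μ hμ
  have h2 := hσMin ν ν' hνν'
  have h3 : (n : ℤ) * lam.weight ≤ (n : ℤ) * μ.weight :=
    mul_le_mul_of_nonneg_left h1 (Int.natCast_nonneg n)
  linarith
end

section
/- Let ρ be a path in an unfolding of the constraint graph of a difference bounds constraint over N variables such that lbcorners(ρ) ≠ ∅. Then ρ has subpaths ρ_1, θ, ρ_2 such that ρ = ρ_1.θ.ρ_2, lbcorners(ρ_1.θ) = {θ}, and extent(θ) = N²+1; the corner θ is called the first lb-corner of ρ. -/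
variable {N : ℕ}

namespace Stmt6

lemma gld_append {α} (l₁ l₂ : List α) (d : α) :
    (l₁ ++ l₂).getLastD d = l₂.getLastD (l₁.getLastD d) := by
  induction l₁ generalizing d with
  | nil => rfl
  | cons a t ih => rw [List.cons_append, List.getLastD_cons, ih, List.getLastD_cons]

def vtxOf (u : Vtx N) (l : List (ℤ × Vtx N)) (i : ℕ) : Vtx N :=
  ((l.take i).map Prod.snd).getLastD u

lemma vtxOf_zero (u : Vtx N) (l : List (ℤ × Vtx N)) : vtxOf u l 0 = u := rfl

lemma vtxOf_succ (u : Vtx N) (l : List (ℤ × Vtx N)) {i : ℕ} (h : i < l.length) :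
    vtxOf u l (i + 1) = (l[i]).2 := by
  have h' : l[i]? = some l[i] := List.getElem?_eq_getElem h
  rw [vtxOf, List.take_succ, h']
  simp only [Option.toList_some, List.map_append, List.map_cons, List.map_nil, gld_append]
  simp [List.getLastD_cons]

lemma vtxOf_cons (u : Vtx N) (p : ℤ × Vtx N) (l : List (ℤ × Vtx N)) (i : ℕ) :
    vtxOf u (p :: l) (i + 1) = vtxOf p.2 l i := by
  rw [vtxOf, vtxOf, List.take_succ_cons, List.map_cons, List.getLastD_cons]

lemma vtxOf_add (u : Vtx N) (l : List (ℤ × Vtx N)) (i j : ℕ) :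
    vtxOf u l (i + j) = vtxOf (vtxOf u l i) (l.drop i) j := by
  rw [vtxOf, vtxOf, vtxOf, List.take_add, List.map_append, gld_append]

lemma chain_edge (E : Vtx N → Vtx N → ℤ → Prop) :
    ∀ (l : List (ℤ × Vtx N)) (u : Vtx N), UPath.EdgeChain E u l →
      ∀ i (h : i < l.length), E (vtxOf u l i) (vtxOf u l (i + 1)) (l[i]).1 := by
  intro l
  induction l with
  | nil => intro u _ i h; simp at h
  | cons p rest ih =>
    intro u hch i h
    cases i with
    | zero =>
      have h1 : vtxOf u (p :: rest) 1 = p.2 := by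
        rw [vtxOf_succ u _ (by simp)]; simp
      simpa [vtxOf_zero, h1] using hch.1
    | succ j =>
      have hj : j < rest.length := by simpa using h
      have := ih p.2 hch.2 j hj
      simpa [vtxOf_cons] using this

lemma edge_pos {R : DBC N} {u v : Vtx N} {c : ℤ} (h : R.Edge u v c) :
    v.1 ≤ u.1 + 1 ∧ u.1 ≤ v.1 + 1 := by
  obtain ⟨p, s, t, _, hu, hv⟩ := h
  subst hu; subst hv
  cases s <;> cases t <;> simp [endpt] <;> omega

lemma ivt_up (g : ℕ → ℤ) (a : ℕ) :
    ∀ b, a ≤ b → (∀ i, a ≤ i → i < b → g (i + 1) ≤ g i + 1) →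
    ∀ m : ℤ, g a ≤ m → m ≤ g b → ∃ i, a ≤ i ∧ i ≤ b ∧ g i = m := by
  intro b
  induction b with
  | zero =>
    intro hab _ m h1 h2
    have ha : a = 0 := Nat.le_zero.mp hab
    subst ha
    exact ⟨0, le_rfl, le_rfl, by omega⟩
  | succ b ih =>
    intro hab hstep m h1 h2
    by_cases hab' : a ≤ b
    · by_cases hm : m ≤ g b
      · obtain ⟨i, hi1, hi2, hi3⟩ := ih hab' (fun i hi hib => hstep i hi (by omega)) m h1 hm
        exact ⟨i, hi1, by omega, hi3⟩
      · have := hstep b hab' (by omega)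
        exact ⟨b + 1, by omega, le_rfl, by omega⟩
    · have ha : a = b + 1 := by omega
      subst ha
      exact ⟨b + 1, le_rfl, le_rfl, by omega⟩

lemma ivt_down (g : ℕ → ℤ) (a b : ℕ) (hab : a ≤ b)
    (hstep : ∀ i, a ≤ i → i < b → g i ≤ g (i + 1) + 1)
    (m : ℤ) (h1 : g b ≤ m) (h2 : m ≤ g a) : ∃ i, a ≤ i ∧ i ≤ b ∧ g i = m := by
  obtain ⟨i, hi1, hi2, hi3⟩ := ivt_up (fun i => -g i) a b hab
    (fun i hx1 hx2 => by show -g (i + 1) ≤ -g i + 1; have := hstep i hx1 hx2; omega)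
    (-m) (by show -g a ≤ -m; omega) (by show -m ≤ -g b; omega)
  have hgi : -g i = -m := hi3
  exact ⟨i, hi1, hi2, by omega⟩

lemma shrink (P : ℕ → ℤ) (s e : ℕ) (k d C : ℤ) (hC : 0 < C) (hdC : C < d)
    (hstep : ∀ i, s ≤ i → i < e → P (i + 1) ≤ P i + 1 ∧ P i ≤ P (i + 1) + 1)
    (hPs : P s = k) (hPe : P e = k)
    (hub : ∀ i, s ≤ i → i ≤ e → P i ≤ k + d)
    (hmax : ∃ i, s ≤ i ∧ i ≤ e ∧ P i = k + d) :
    ∃ a b, s ≤ a ∧ a < b ∧ b < e ∧ P a = k + d - C ∧ P b = k + d - C ∧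
      (∀ i, a < i → i < b → k + d - C < P i) ∧
      (∀ i, a ≤ i → i ≤ b → P i ≤ k + d) ∧
      (∀ x, k + d - C ≤ x → x ≤ k + d → ∃ i, a ≤ i ∧ i ≤ b ∧ P i = x) := by
  classical
  obtain ⟨t, hst, hte, hPt⟩ := hmax
  have hup : ∀ i, s ≤ i → i < t → P (i + 1) ≤ P i + 1 :=
    fun i h1 h2 => (hstep i h1 (by omega)).1
  have hdown : ∀ i, t ≤ i → i < e → P i ≤ P (i + 1) + 1 :=
    fun i h1 h2 => (hstep i (by omega) h2).2
  obtain ⟨j₀, hj₀s, hj₀t, hPj₀⟩ := ivt_up P s t hst hup (k + d - C) (by omega) (by omega)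
  set Q : ℕ → Prop := fun j => s ≤ j ∧ P j = k + d - C with hQ
  have haQ : Q (Nat.findGreatest Q t) := Nat.findGreatest_spec hj₀t ⟨hj₀s, hPj₀⟩
  obtain ⟨has, hPa⟩ := haQ
  set a := Nat.findGreatest Q t with ha
  have hat : a ≤ t := Nat.findGreatest_le t
  have hgr : ∀ j, a < j → j ≤ t → P j ≠ k + d - C := by
    intro j h1 h2 hPj
    exact Nat.findGreatest_is_greatest h1 h2 ⟨by omega, hPj⟩
  have hant : a ≠ t := by intro hh; rw [hh] at hPa; omega
  have hexB : ∃ j : ℕ, t ≤ j ∧ j ≤ e ∧ P j = k + d - C := by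
    obtain ⟨j, h1, h2, h3⟩ := ivt_down P t e hte hdown (k + d - C) (by omega) (by omega)
    exact ⟨j, h1, h2, h3⟩
  have hspec := Nat.find_spec hexB
  set b := Nat.find hexB with hb
  obtain ⟨htb, hbe, hPb⟩ := hspec
  have hmin : ∀ j, t ≤ j → j < b → P j ≠ k + d - C := by
    intro j h1 h2 hPj
    exact Nat.find_min hexB (hb ▸ h2) ⟨h1, by omega, hPj⟩
  have hbt : b ≠ t := by intro hh; rw [hh] at hPb; omega
  have hbne : b ≠ e := by intro hh; rw [hh] at hPb; omega
  have hint : ∀ i, a < i → i < b → k + d - C < P i := by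
    intro i h1 h2
    by_contra hle
    push_neg at hle
    rcases le_or_gt i t with hit | hti
    · obtain ⟨j, hj1, hj2, hj3⟩ := ivt_up P i t hit
        (fun x hx1 hx2 => hup x (by omega) hx2) (k + d - C) hle (by omega)
      exact hgr j (by omega) hj2 hj3
    · obtain ⟨j, hj1, hj2, hj3⟩ := ivt_down P t i (by omega)
        (fun x hx1 hx2 => hdown x hx1 (by omega)) (k + d - C) hle (by omega)
      exact hmin j hj1 (by omega) hj3
  refine ⟨a, b, has, by omega, by omega, hPa, hPb, hint, ?_, ?_⟩
  · intro i hi1 hi2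
    exact hub i (by omega) (by omega)
  · intro x hx1 hx2
    obtain ⟨i, hi1, hi2, hi3⟩ := ivt_up P a t hat
      (fun y hy1 hy2 => hup y (by omega) hy2) x (by omega) (by omega)
    exact ⟨i, hi1, by omega, hi3⟩

end Stmt6

namespace Stmt6

variable {N : ℕ}

def subOcc (u : Vtx N) (l : List (ℤ × Vtx N)) (s e : ℕ) : UPath N :=
  ⟨vtxOf u l s, (l.drop s).take (e - s)⟩

lemma subOcc_first (u : Vtx N) (l : List (ℤ × Vtx N)) (s e : ℕ) :
    (subOcc u l s e).first = vtxOf u l s := rfl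

lemma subOcc_steps_length (u : Vtx N) (l : List (ℤ × Vtx N)) {s e : ℕ}
    (hse : s ≤ e) (hen : e ≤ l.length) : (subOcc u l s e).steps.length = e - s := by
  simp only [subOcc, List.length_take, List.length_drop]
  omega

lemma subOcc_last (u : Vtx N) (l : List (ℤ × Vtx N)) {s e : ℕ} (hse : s ≤ e) :
    (subOcc u l s e).last = vtxOf u l e := by
  have he : vtxOf u l e = vtxOf u l (s + (e - s)) := by congr 1; omega
  rw [he, vtxOf_add]
  rfl

lemma subOcc_lt_of_steps_ne (u : Vtx N) (l : List (ℤ × Vtx N)) {s e : ℕ}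
    (h : (subOcc u l s e).steps ≠ []) : s < e := by
  by_contra hc
  push_neg at hc
  apply h
  simp [subOcc, Nat.sub_eq_zero_of_le hc]

lemma subOcc_vertices (u : Vtx N) (l : List (ℤ × Vtx N)) :
    ∀ (m s : ℕ), s + m ≤ l.length →
      (subOcc u l s (s + m)).vertices = (List.range' s (m + 1)).map (vtxOf u l) := by
  intro m
  induction m with
  | zero =>
    intro s h
    simp [subOcc, UPath.vertices]
  | succ m ih =>
    intro s h
    have hs : s < l.length := by omega
    have h1 : (subOcc u l s (s + (m + 1))).vertices
        = vtxOf u l s :: (subOcc u l (s + 1) (s + 1 + m)).vertices := by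
      simp only [subOcc, UPath.vertices]
      rw [List.drop_eq_getElem_cons hs]
      rw [show s + (m + 1) - s = m + 1 by omega, show s + 1 + m - (s + 1) = m by omega]
      rw [List.take_succ_cons, List.map_cons]
      rw [vtxOf_succ u l hs]
    rw [h1, ih (s + 1) (by omega)]
    simp [List.range'_succ]

lemma subOcc_pos_mem (u : Vtx N) (l : List (ℤ × Vtx N)) {s e : ℕ}
    (hse : s ≤ e) (hen : e ≤ l.length) (x : ℤ) :
    x ∈ (subOcc u l s e).posFinset ↔ ∃ i, s ≤ i ∧ i ≤ e ∧ (vtxOf u l i).1 = x := by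
  have hv := subOcc_vertices u l (e - s) s (by omega)
  rw [show s + (e - s) = e by omega] at hv
  simp only [UPath.posFinset, UPath.posList, List.mem_toFinset, List.mem_map, hv]
  constructor
  · rintro ⟨v, ⟨i, hi, rfl⟩, rfl⟩
    rw [List.mem_range'_1] at hi
    exact ⟨i, by omega, by omega, rfl⟩
  · rintro ⟨i, h1, h2, rfl⟩
    exact ⟨vtxOf u l i, ⟨i, by rw [List.mem_range'_1]; omega, rfl⟩, rfl⟩

lemma isSubpath_iff (θ : UPath N) (u : Vtx N) (l : List (ℤ × Vtx N)) :
    θ.IsSubpath ⟨u, l⟩ ↔ ∃ s e, s ≤ e ∧ e ≤ l.length ∧ θ = subOcc u l s e := by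
  constructor
  · rintro ⟨pre, post, hst, hf⟩
    obtain ⟨tf, ts⟩ := θ
    simp only at hst hf
    refine ⟨pre.length, pre.length + ts.length, Nat.le_add_right _ _, ?_, ?_⟩
    · rw [hst]; simp only [List.length_append]; omega
    · have hpre : l.take pre.length = pre := by
        rw [hst, List.append_assoc, List.take_left]
      have hdrop : l.drop pre.length = ts ++ post := by
        rw [hst, List.append_assoc, List.drop_left]
      show UPath.mk tf ts = UPath.mk (vtxOf u l pre.length)
        ((l.drop pre.length).take (pre.length + ts.length - pre.length))
      congr 1
      · rw [hf]
        show (pre.map Prod.snd).getLastD u = _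
        rw [vtxOf, hpre]
      · rw [hdrop, show pre.length + ts.length - pre.length = ts.length by omega,
          List.take_left]
  · rintro ⟨s, e, hse, hen, rfl⟩
    refine ⟨l.take s, l.drop e, ?_, rfl⟩
    show l = l.take s ++ (l.drop s).take (e - s) ++ l.drop e
    have h1 : l.take s ++ (l.drop s).take (e - s) = l.take e := by
      rw [← List.take_add]; congr 1; omega
    rw [h1, List.take_append_drop]

lemma subOcc_take (u : Vtx N) (l : List (ℤ × Vtx N)) {s' e' e : ℕ}
    (h1 : s' ≤ e') (h2 : e' ≤ e) :
    subOcc u (l.take e) s' e' = subOcc u l s' e' := by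
  have ha : s' ⊓ e = s' := Nat.min_eq_left (le_trans h1 h2)
  have hb : (e' - s') ⊓ (e - s') = e' - s' := Nat.min_eq_left (by omega)
  simp only [subOcc, vtxOf, List.take_take, List.drop_take, ha, hb]

lemma isBasic_iff (u : Vtx N) (l : List (ℤ × Vtx N)) {s e : ℕ}
    (hse : s < e) (hen : e ≤ l.length) :
    (subOcc u l s e).IsBasic ↔
      ∀ i, s < i → i < e → (vtxOf u l i).1 ≠ (vtxOf u l s).1 := by
  have hdl : (subOcc u l s e).steps.dropLast = (l.drop s).take (e - s - 1) := by
    rw [List.dropLast_eq_take, subOcc_steps_length u l hse.le hen]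
    show ((l.drop s).take (e - s)).take (e - s - 1) = _
    rw [List.take_take]
    congr 1
    omega
  have hlen : ((l.drop s).take (e - s - 1)).length = e - s - 1 := by
    simp only [List.length_take, List.length_drop]; omega
  constructor
  · intro hb i h1 h2
    obtain ⟨j, rfl⟩ : ∃ j, i = s + j + 1 := ⟨i - s - 1, by omega⟩
    have hjlen : j < ((l.drop s).take (e - s - 1)).length := by rw [hlen]; omega
    have hmem : ((l.drop s).take (e - s - 1))[j] ∈ (subOcc u l s e).steps.dropLast := by
      rw [hdl]; exact List.getElem_mem hjlen
    have hthis := hb _ hmem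
    have hsj : s + j < l.length := by omega
    rw [List.getElem_take, List.getElem_drop, ← vtxOf_succ u l hsj] at hthis
    exact hthis
  · intro hx st hst
    rw [hdl] at hst
    obtain ⟨j, hj, rfl⟩ := List.mem_iff_getElem.mp hst
    have hj' : j < e - s - 1 := by rw [hlen] at hj; omega
    have hsj : s + j < l.length := by omega
    show _ ≠ (subOcc u l s e).first.1
    rw [List.getElem_take, List.getElem_drop, ← vtxOf_succ u l hsj]
    exact hx (s + j + 1) (by omega) (by omega)

lemma extent_of_Icc (θ : UPath N) (x y : ℤ) (hxy : x ≤ y)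
    (h : θ.posFinset = Finset.Icc x y) : θ.extent = y - x := by
  have hmax : θ.posFinset.max' θ.posFinset_nonempty = y := by
    apply le_antisymm
    · apply Finset.max'_le
      intro z hz
      rw [h, Finset.mem_Icc] at hz
      omega
    · apply Finset.le_max'
      rw [h, Finset.mem_Icc]
      omega
  have hmin : θ.posFinset.min' θ.posFinset_nonempty = x := by
    apply le_antisymm
    · apply Finset.min'_le
      rw [h, Finset.mem_Icc]
      omega
    · apply Finset.le_min'
      intro z hz
      rw [h, Finset.mem_Icc] at hz
      omega
  rw [UPath.extent, hmax, hmin]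

end Stmt6

namespace Stmt6

variable {N : ℕ}

lemma mk_lb_right (u : Vtx N) (l : List (ℤ × Vtx N)) {a b : ℕ}
    (hab : a < b) (hbn : b ≤ l.length)
    (hvert : (vtxOf u l b).1 = (vtxOf u l a).1)
    (hint : ∀ i, a < i → i < b → (vtxOf u l a).1 < (vtxOf u l i).1)
    (hup : ∀ i, a ≤ i → i ≤ b → (vtxOf u l i).1 ≤ (vtxOf u l a).1 + ((N ^ 2 + 1 : ℕ) : ℤ))
    (hsurj : ∀ x, (vtxOf u l a).1 ≤ x → x ≤ (vtxOf u l a).1 + ((N ^ 2 + 1 : ℕ) : ℤ) →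
      ∃ i, a ≤ i ∧ i ≤ b ∧ (vtxOf u l i).1 = x) :
    (subOcc u l a b).IsLBCorner ∧ (subOcc u l a b).extent = ((N ^ 2 + 1 : ℕ) : ℤ) := by
  have hne : (subOcc u l a b).steps ≠ [] := by
    have hl := subOcc_steps_length u l hab.le hbn
    intro hc
    rw [hc] at hl
    simp only [List.length_nil] at hl
    omega
  have hfst : (subOcc u l a b).first.1 = (vtxOf u l a).1 := rfl
  have hIcc : (subOcc u l a b).posFinset
      = Finset.Icc (subOcc u l a b).first.1 ((subOcc u l a b).first.1 + ((N ^ 2 + 1 : ℕ) : ℤ)) := by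
    rw [hfst]
    ext x
    rw [subOcc_pos_mem u l hab.le hbn, Finset.mem_Icc]
    constructor
    · rintro ⟨i, h1, h2, rfl⟩
      refine ⟨?_, hup i h1 h2⟩
      by_cases hia : i = a
      · subst hia; exact le_rfl
      by_cases hib : i = b
      · subst hib; rw [hvert]
      · exact (hint i (by omega) (by omega)).le
    · rintro ⟨hx1, hx2⟩
      exact hsurj x hx1 hx2
  have hvert' : (subOcc u l a b).last.1 = (subOcc u l a b).first.1 := by
    rw [subOcc_last u l hab.le]
    exact hvert
  have hrc : (subOcc u l a b).IsRightCorner := ⟨hne, hvert', ⟨N ^ 2 + 1, hIcc⟩⟩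
  have hC0 : (0:ℤ) ≤ ((N ^ 2 + 1 : ℕ) : ℤ) := Int.natCast_nonneg _
  have hext : (subOcc u l a b).extent = ((N ^ 2 + 1 : ℕ) : ℤ) := by
    have hx := extent_of_Icc _ _ _ (by omega) hIcc
    omega
  refine ⟨⟨⟨Or.inl hrc, ?_⟩, ?_⟩, hext⟩
  · rw [hext]
    push_cast
    exact lt_add_one _
  · rw [isBasic_iff u l hab hbn]
    intro i h1 h2
    exact (hint i h1 h2).ne'

lemma mk_lb_left (u : Vtx N) (l : List (ℤ × Vtx N)) {a b : ℕ}
    (hab : a < b) (hbn : b ≤ l.length)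
    (hvert : (vtxOf u l b).1 = (vtxOf u l a).1)
    (hint : ∀ i, a < i → i < b → (vtxOf u l i).1 < (vtxOf u l a).1)
    (hlow : ∀ i, a ≤ i → i ≤ b → (vtxOf u l a).1 - ((N ^ 2 + 1 : ℕ) : ℤ) ≤ (vtxOf u l i).1)
    (hsurj : ∀ x, (vtxOf u l a).1 - ((N ^ 2 + 1 : ℕ) : ℤ) ≤ x → x ≤ (vtxOf u l a).1 →
      ∃ i, a ≤ i ∧ i ≤ b ∧ (vtxOf u l i).1 = x) :
    (subOcc u l a b).IsLBCorner ∧ (subOcc u l a b).extent = ((N ^ 2 + 1 : ℕ) : ℤ) := by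
  have hne : (subOcc u l a b).steps ≠ [] := by
    have hl := subOcc_steps_length u l hab.le hbn
    intro hc
    rw [hc] at hl
    simp only [List.length_nil] at hl
    omega
  have hfst : (subOcc u l a b).first.1 = (vtxOf u l a).1 := rfl
  have hIcc : (subOcc u l a b).posFinset
      = Finset.Icc ((subOcc u l a b).first.1 - ((N ^ 2 + 1 : ℕ) : ℤ)) (subOcc u l a b).first.1 := by
    rw [hfst]
    ext x
    rw [subOcc_pos_mem u l hab.le hbn, Finset.mem_Icc]
    constructor
    · rintro ⟨i, h1, h2, rfl⟩
      refine ⟨hlow i h1 h2, ?_⟩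
      by_cases hia : i = a
      · subst hia; exact le_rfl
      by_cases hib : i = b
      · subst hib; rw [hvert]
      · exact (hint i (by omega) (by omega)).le
    · rintro ⟨hx1, hx2⟩
      exact hsurj x hx1 hx2
  have hvert' : (subOcc u l a b).last.1 = (subOcc u l a b).first.1 := by
    rw [subOcc_last u l hab.le]
    exact hvert
  have hlc : (subOcc u l a b).IsLeftCorner := ⟨hne, hvert', ⟨N ^ 2 + 1, hIcc⟩⟩
  have hC0 : (0:ℤ) ≤ ((N ^ 2 + 1 : ℕ) : ℤ) := Int.natCast_nonneg _
  have hext : (subOcc u l a b).extent = ((N ^ 2 + 1 : ℕ) : ℤ) := by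
    have hx := extent_of_Icc _ _ _ (by omega) hIcc
    omega
  refine ⟨⟨⟨Or.inr hlc, ?_⟩, ?_⟩, hext⟩
  · rw [hext]
    push_cast
    exact lt_add_one _
  · rw [isBasic_iff u l hab hbn]
    intro i h1 h2
    exact (hint i h1 h2).ne

end Stmt6

open Stmt6

/-- Every path with an lb-corner subpath has a first lb-corner,
of extent `N² + 1`. -/
theorem statement6 (N : ℕ) (hN : 1 ≤ N) (R : DBC N) (ρ : UPath N)
    (hρ : ρ.InUnf R) (h : ∃ θ : UPath N, θ.IsSubpath ρ ∧ θ.IsLBCorner) :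
    ∃ ρ₁ θ ρ₂ : UPath N,
      ρ = ρ₁.append (θ.append ρ₂) ∧ θ.first = ρ₁.last ∧ ρ₂.first = θ.last ∧
      θ.IsLBCorner ∧ θ.extent = (N : ℤ) ^ 2 + 1 ∧
      (∀ θ' : UPath N, θ'.IsSubpath (ρ₁.append θ) → θ'.IsLBCorner → θ' = θ) := by
  classical
  obtain ⟨f, L⟩ := ρ
  have hcast2 : ((N ^ 2 : ℕ) : ℤ) = (N : ℤ) ^ 2 := by push_cast; ring
  have hcast1 : ((N ^ 2 + 1 : ℕ) : ℤ) = ((N ^ 2 : ℕ) : ℤ) + 1 := by push_cast; ring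
  have hstepAll : ∀ i, i < L.length →
      (vtxOf f L (i + 1)).1 ≤ (vtxOf f L i).1 + 1 ∧
      (vtxOf f L i).1 ≤ (vtxOf f L (i + 1)).1 + 1 := by
    intro i hi
    exact edge_pos (chain_edge R.Edge L f hρ i hi)
  have hEx : ∃ e, ∃ s, s < e ∧ e ≤ L.length ∧ (subOcc f L s e).IsLBCorner := by
    obtain ⟨θ₀, hsub, hlb⟩ := h
    have hne : θ₀.steps ≠ [] := by
      rcases hlb.1.1 with hc | hc
      · exact hc.1
      · exact hc.1
    obtain ⟨s, e, hse, hen, rfl⟩ := (isSubpath_iff θ₀ f L).mp hsub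
    exact ⟨e, s, subOcc_lt_of_steps_ne f L hne, hen, hlb⟩
  obtain ⟨e, hespec, hemin⟩ :
      ∃ e, (∃ s, s < e ∧ e ≤ L.length ∧ (subOcc f L s e).IsLBCorner) ∧
        ∀ e', e' < e → ¬ ∃ s', s' < e' ∧ e' ≤ L.length ∧ (subOcc f L s' e').IsLBCorner :=
    ⟨Nat.find hEx, Nat.find_spec hEx, fun e' h' => Nat.find_min hEx h'⟩
  obtain ⟨s, hse, hen, hlbθ⟩ := hespec
  have hθlast : (subOcc f L s e).last = vtxOf f L e := subOcc_last f L hse.le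
  have hvertθ : (vtxOf f L e).1 = (vtxOf f L s).1 := by
    rcases hlbθ.1.1 with hc | hc
    · have hc1 := hc.2.1; rw [hθlast] at hc1; exact hc1
    · have hc1 := hc.2.1; rw [hθlast] at hc1; exact hc1
  have hbasθ : ∀ i, s < i → i < e → (vtxOf f L i).1 ≠ (vtxOf f L s).1 :=
    (isBasic_iff f L hse hen).mp hlbθ.2
  -- extent is exactly N² + 1
  have hext : (subOcc f L s e).extent = (N : ℤ) ^ 2 + 1 := by
    have hC0 : (0:ℤ) < ((N ^ 2 + 1 : ℕ) : ℤ) := by exact_mod_cast Nat.succ_pos (N ^ 2)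
    rcases hlbθ.1.1 with hc | hc
    · -- right corner
      obtain ⟨d, hIcc⟩ := hc.2.2
      have hfst : (subOcc f L s e).first.1 = (vtxOf f L s).1 := rfl
      rw [hfst] at hIcc
      have hd0 : (0:ℤ) ≤ (d : ℕ) := Int.natCast_nonneg d
      have hextd : (subOcc f L s e).extent = (d : ℤ) := by
        have hx := extent_of_Icc _ _ _ (by omega) hIcc
        omega
      have hlong : ((N ^ 2 : ℕ) : ℤ) < (d : ℤ) := by
        have hl := hlbθ.1.2
        rw [hextd] at hl
        rw [hcast2]
        exact hl
      rw [hextd, ← hcast2]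
      by_contra hdne
      have hd2 : ((N ^ 2 : ℕ) : ℤ) + 2 ≤ (d : ℤ) := by omega
      have hub : ∀ i, s ≤ i → i ≤ e → (vtxOf f L i).1 ≤ (vtxOf f L s).1 + (d : ℤ) := by
        intro i h1 h2
        have hx : (vtxOf f L i).1 ∈ (subOcc f L s e).posFinset :=
          (subOcc_pos_mem f L hse.le hen _).mpr ⟨i, h1, h2, rfl⟩
        rw [hIcc, Finset.mem_Icc] at hx
        exact hx.2
      have hmaxx : ∃ i, s ≤ i ∧ i ≤ e ∧ (vtxOf f L i).1 = (vtxOf f L s).1 + (d : ℤ) := by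
        have hx : (vtxOf f L s).1 + (d : ℤ) ∈ (subOcc f L s e).posFinset := by
          rw [hIcc, Finset.mem_Icc]
          omega
        exact (subOcc_pos_mem f L hse.le hen _).mp hx
      obtain ⟨a, b, hsa, hab, hbe, hPa, hPb, hint, hub', hsurj⟩ :=
        shrink (fun i => (vtxOf f L i).1) s e (vtxOf f L s).1 (d : ℤ) ((N ^ 2 + 1 : ℕ) : ℤ)
          hC0 (by omega)
          (fun i h1 h2 => hstepAll i (by omega)) rfl hvertθ hub hmaxx
      have hbn : b ≤ L.length := by omega
      obtain ⟨hlb', _⟩ := mk_lb_right f L hab hbn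
        (by omega)
        (fun i h1 h2 => by have := hint i h1 h2; omega)
        (fun i h1 h2 => by have := hub' i h1 h2; omega)
        (fun x hx1 hx2 => hsurj x (by omega) (by omega))
      exact hemin b hbe ⟨a, hab, hbn, hlb'⟩
    · -- left corner
      obtain ⟨d, hIcc⟩ := hc.2.2
      have hfst : (subOcc f L s e).first.1 = (vtxOf f L s).1 := rfl
      rw [hfst] at hIcc
      have hd0 : (0:ℤ) ≤ (d : ℕ) := Int.natCast_nonneg d
      have hextd : (subOcc f L s e).extent = (d : ℤ) := by
        have hx := extent_of_Icc _ _ _ (by omega) hIcc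
        omega
      have hlong : ((N ^ 2 : ℕ) : ℤ) < (d : ℤ) := by
        have hl := hlbθ.1.2
        rw [hextd] at hl
        rw [hcast2]
        exact hl
      rw [hextd, ← hcast2]
      by_contra hdne
      have hd2 : ((N ^ 2 : ℕ) : ℤ) + 2 ≤ (d : ℤ) := by omega
      have hlow : ∀ i, s ≤ i → i ≤ e → (vtxOf f L s).1 - (d : ℤ) ≤ (vtxOf f L i).1 := by
        intro i h1 h2
        have hx : (vtxOf f L i).1 ∈ (subOcc f L s e).posFinset :=
          (subOcc_pos_mem f L hse.le hen _).mpr ⟨i, h1, h2, rfl⟩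
        rw [hIcc, Finset.mem_Icc] at hx
        exact hx.1
      have hminx : ∃ i, s ≤ i ∧ i ≤ e ∧ (vtxOf f L i).1 = (vtxOf f L s).1 - (d : ℤ) := by
        have hx : (vtxOf f L s).1 - (d : ℤ) ∈ (subOcc f L s e).posFinset := by
          rw [hIcc, Finset.mem_Icc]
          omega
        exact (subOcc_pos_mem f L hse.le hen _).mp hx
      obtain ⟨i₀, hi₀1, hi₀2, hi₀3⟩ := hminx
      obtain ⟨a, b, hsa, hab, hbe, hPa, hPb, hint, hub', hsurj⟩ :=
        shrink (fun i => 2 * (vtxOf f L s).1 - (vtxOf f L i).1) s e (vtxOf f L s).1 (d : ℤ)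
          ((N ^ 2 + 1 : ℕ) : ℤ) hC0 (by omega)
          (fun i h1 h2 => by
            have := hstepAll i (by omega)
            constructor
            · show 2 * (vtxOf f L s).1 - (vtxOf f L (i + 1)).1 ≤
                2 * (vtxOf f L s).1 - (vtxOf f L i).1 + 1
              omega
            · show 2 * (vtxOf f L s).1 - (vtxOf f L i).1 ≤
                2 * (vtxOf f L s).1 - (vtxOf f L (i + 1)).1 + 1
              omega)
          (by show 2 * (vtxOf f L s).1 - (vtxOf f L s).1 = (vtxOf f L s).1; ring)
          (by show 2 * (vtxOf f L s).1 - (vtxOf f L e).1 = (vtxOf f L s).1; omega)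
          (fun i h1 h2 => by
            have := hlow i h1 h2
            show 2 * (vtxOf f L s).1 - (vtxOf f L i).1 ≤ (vtxOf f L s).1 + (d : ℤ)
            omega)
          ⟨i₀, hi₀1, hi₀2, by
            show 2 * (vtxOf f L s).1 - (vtxOf f L i₀).1 = (vtxOf f L s).1 + (d : ℤ)
            omega⟩
      have hbn : b ≤ L.length := by omega
      obtain ⟨hlb', _⟩ := mk_lb_left f L hab hbn
        (by omega)
        (fun i h1 h2 => by have := hint i h1 h2; omega)
        (fun i h1 h2 => by have := hub' i h1 h2; omega)
        (fun x hx1 hx2 => by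
          obtain ⟨i, h1, h2, h3⟩ := hsurj (2 * (vtxOf f L s).1 - x) (by omega) (by omega)
          exact ⟨i, h1, h2, by omega⟩)
      exact hemin b hbe ⟨a, hab, hbn, hlb'⟩
  -- assembly
  refine ⟨⟨f, L.take s⟩, subOcc f L s e, ⟨vtxOf f L e, L.drop e⟩, ?_, rfl, ?_, hlbθ, hext, ?_⟩
  · show UPath.mk f L = UPath.mk f (L.take s ++ ((L.drop s).take (e - s) ++ L.drop e))
    congr 1
    have h1 : L.take s ++ (L.drop s).take (e - s) = L.take e := by
      rw [← List.take_add]; congr 1; omega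
    rw [← List.append_assoc, h1, List.take_append_drop]
  · exact hθlast.symm
  · intro θ' hsub' hlb'
    have hEq : (UPath.mk f (L.take s)).append (subOcc f L s e) = UPath.mk f (L.take e) := by
      show UPath.mk f (L.take s ++ (L.drop s).take (e - s)) = _
      congr 1
      rw [← List.take_add]; congr 1; omega
    rw [hEq] at hsub'
    obtain ⟨s', e', hs'e', he'len, rfl⟩ := (isSubpath_iff θ' f (L.take e)).mp hsub'
    have he'e : e' ≤ e := by
      have hl : (L.take e).length = e := by rw [List.length_take]; omega
      omega
    rw [subOcc_take f L hs'e' he'e] at hlb' ⊢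
    have hne' : (subOcc f L s' e').steps ≠ [] := by
      rcases hlb'.1.1 with hc | hc
      · exact hc.1
      · exact hc.1
    have hs'lt : s' < e' := subOcc_lt_of_steps_ne f L hne'
    have he'eq : e' = e := by
      by_contra hcc
      exact hemin e' (by omega) ⟨s', hs'lt, by omega, hlb'⟩
    subst he'eq
    have hvert' : (vtxOf f L e').1 = (vtxOf f L s').1 := by
      rcases hlb'.1.1 with hc | hc
      · have hc1 := hc.2.1; rw [subOcc_last f L hs'lt.le] at hc1; exact hc1
      · have hc1 := hc.2.1; rw [subOcc_last f L hs'lt.le] at hc1; exact hc1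
    have hbas' := (isBasic_iff f L hs'lt (by omega)).mp hlb'.2
    have hss : s' = s := by
      by_contra hss
      rcases Nat.lt_or_ge s' s with h1 | h1
      · exact hbas' s (by omega) (by omega) (by rw [← hvertθ]; exact hvert')
      · exact hbasθ s' (by omega) (by omega) (by rw [← hvert']; exact hvertθ)
    subst hss
    rfl
end

section
/- Let R be a balanced difference bounds constraint over N variables, n ≥ 1 and 0 ≤ p ≤ q ≤ n integers, ρ an extremal path in G_R^n, and ξ ∈ segments(ρ,p,q) a segment with lbcorners(ξ) ≠ ∅. Then the first lb-corner of ξ is a right corner if and only if ξ starts at position p, and is a left corner if and only if ξ starts at position q. -/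
variable {N : ℕ}

/-
A segment starts at `p` or at `q`: either it starts the extremal path `ρ`, or the edge entering
it leaves `{p, …, q}`, and edges change positions by at most one.

Suppose the segment starts at `q` and its first lb-corner `θ`, starting at position `k`, were a
right corner of extent `d > N²`. The prefix `ξ₁` leads from `q ≥ k + d` down to `k`, so it
visits `M = k + d`, as does `θ`. The stretch from the last visit of `M` in `ξ₁` to the first
visit of `M` in `θ` is a basic vertical path through `k`, hence a left corner of extent at
least `d`: an lb-corner ending strictly before `θ` does, contradicting the choice of `θ`.
The case of a left corner and a segment starting at `p` is symmetric.
-/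

namespace List

theorem exists_split_at_first_of_exists {α : Type*} {P : α → Prop} {l : List α}
    (h : ∃ x ∈ l, P x) : ∃ as b bs, l = as ++ b :: bs ∧ P b ∧ ∀ a ∈ as, ¬ P a := by
  classical
  obtain ⟨b, hb⟩ := Option.isSome_iff_exists.1
    (find?_isSome (p := fun x => decide (P x)) |>.2 (by simpa using h))
  obtain ⟨hPb, as, bs, rfl, has⟩ := find?_eq_some_iff_append.1 hb
  exact ⟨as, b, bs, rfl, by simpa using hPb, fun a ha => by simpa using has a ha⟩

theorem exists_split_at_last_of_exists {α : Type*} {P : α → Prop} {l : List α}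
    (h : ∃ x ∈ l, P x) : ∃ as b bs, l = as ++ b :: bs ∧ P b ∧ ∀ c ∈ bs, ¬ P c := by
  obtain ⟨as, b, bs, hl, hb, has⟩ :=
    exists_split_at_first_of_exists (l := l.reverse) (by simpa using h)
  refine ⟨bs.reverse, b, as.reverse, ?_, hb, by simpa using has⟩
  rw [← reverse_reverse l, hl]
  simp

end List

def UnitSteps (L : List ℤ) : Prop := L.IsChain fun a b => |a - b| ≤ 1

namespace UnitSteps

variable {L L' : List ℤ}

theorem of_isInfix (h : UnitSteps L) (h' : L' <:+: L) : UnitSteps L' := List.IsChain.infix h h'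

theorem mem_of_le_of_le (h : UnitSteps L) {x y m : ℤ} (hx : x ∈ L) (hy : y ∈ L)
    (hxm : x ≤ m) (hmy : m ≤ y) : m ∈ L := by
  induction L generalizing x y with
  | nil => simp at hx
  | cons a L ih =>
    by_cases hm : m = a
    · simp [hm]
    have ih' {x y : ℤ} (hx : x ∈ L) (hy : y ∈ L) (hxm : x ≤ m) (hmy : m ≤ y) : m ∈ a :: L :=
      List.mem_cons_of_mem _ (ih h.tail hx hy hxm hmy)
    rcases L with _ | ⟨b, L⟩
    · simp only [List.mem_singleton] at hx hy
      omega
    have hab := abs_le.1 (List.isChain_cons_cons.1 h).1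
    rcases List.mem_cons.1 hx with hxa | hx <;> rcases List.mem_cons.1 hy with hya | hy
    · omega
    · exact ih' List.mem_cons_self hy (by omega) hmy
    · exact ih' hx List.mem_cons_self hxm (by omega)
    · exact ih' hx hy hxm hmy

theorem forall_lt_of_notMem (h : UnitSteps L) {M k : ℤ} (hM : M ∉ L) (hk : k ∈ L)
    (hkM : k < M) : ∀ x ∈ L, x < M := fun _ hx =>
  lt_of_not_ge fun hxM => hM (h.mem_of_le_of_le hk hx hkM.le hxM)

theorem forall_gt_of_notMem (h : UnitSteps L) {M k : ℤ} (hM : M ∉ L) (hk : k ∈ L)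
    (hMk : M < k) : ∀ x ∈ L, M < x := fun _ hx =>
  lt_of_not_ge fun hxM => hM (h.mem_of_le_of_le hx hk hxM hMk.le)

theorem toFinset_eq_Icc (h : UnitSteps L) (hne : L.toFinset.Nonempty) :
    L.toFinset = Finset.Icc (L.toFinset.min' hne) (L.toFinset.max' hne) := by
  ext x
  refine ⟨fun hx => Finset.mem_Icc.2 ⟨Finset.min'_le _ _ hx, Finset.le_max' _ _ hx⟩,
    fun hx => ?_⟩
  obtain ⟨hmin, hmax⟩ := Finset.mem_Icc.1 hx
  exact List.mem_toFinset.2 (h.mem_of_le_of_le (List.mem_toFinset.1 (Finset.min'_mem _ _))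
    (List.mem_toFinset.1 (Finset.max'_mem _ _)) hmin hmax)

end UnitSteps

theorem DBC.EdgeN.abs_sub_le_one {R : DBC N} {n : ℕ} {u v : Vtx N} {c : ℤ}
    (h : R.EdgeN n u v c) : |u.1 - v.1| ≤ 1 := by
  obtain ⟨r, -, -, s, t, -, rfl, rfl⟩ := h
  rw [abs_le]
  cases s <;> cases t <;> simp [endpt]

namespace UPath

variable {ρ θ π ξ₁ : UPath N}

theorem posList_eq_cons (ρ : UPath N) : ρ.posList = ρ.first.1 :: ρ.steps.map (·.2.1) := by
  simp [posList, vertices]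

theorem first_mem_posList (ρ : UPath N) : ρ.first.1 ∈ ρ.posList := by
  simp [posList, vertices]

theorem last_mem_posList (ρ : UPath N) : ρ.last.1 ∈ ρ.posList :=
  List.mem_map_of_mem List.getLastD_mem_cons

theorem last_mk_append (f : Vtx N) (l₁ l₂ : List (ℤ × Vtx N)) :
    (mk f (l₁ ++ l₂)).last = (mk (mk f l₁).last l₂).last := by
  simp only [last, List.map_append, List.getLastD_eq_getLast?, List.getLast?_append]
  cases (l₂.map Prod.snd).getLast? <;> rfl

theorem posList_eq_of_steps_ne_nil (hne : ρ.steps ≠ []) :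
    ρ.posList = ρ.first.1 :: (ρ.steps.dropLast.map (·.2.1) ++ [ρ.last.1]) := by
  obtain ⟨f, l⟩ := ρ
  obtain ⟨l, s, rfl⟩ := List.eq_nil_or_concat l |>.resolve_left hne
  simp [posList_eq_cons, last]

theorem posList_eq_dropLast_append_last (ρ : UPath N) :
    ρ.posList = ρ.posList.dropLast ++ [ρ.last.1] := by
  obtain ⟨f, l⟩ := ρ
  rcases List.eq_nil_or_concat l with rfl | ⟨l, s, rfl⟩
  · simp [posList_eq_cons, last]
  · simp only [posList_eq_cons, last, List.concat_eq_append, List.map_append, List.map_cons,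
      List.map_nil, List.getLastD_concat]
    rw [← List.cons_append, List.dropLast_concat]

theorem IsSubpath.posList_infix (h : θ.IsSubpath ρ) : θ.posList <:+: ρ.posList := by
  obtain ⟨pre, post, hsteps, hfirst⟩ := h
  have hpre := posList_eq_dropLast_append_last (mk ρ.first pre)
  rw [← hfirst, posList_eq_cons] at hpre
  refine ⟨(mk ρ.first pre).posList.dropLast, post.map (·.2.1), ?_⟩
  rw [posList_eq_cons (mk ρ.first pre), θ.posList_eq_cons, ρ.posList_eq_cons, hsteps]
  dsimp only at hpre ⊢
  rw [List.map_append, List.map_append, ← List.cons_append, ← List.cons_append, hpre]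
  simp

theorem isSubpath_append_left (ρ π : UPath N) : ρ.IsSubpath (ρ.append π) :=
  ⟨[], π.steps, by simp [append], rfl⟩

theorem isSubpath_append_right (h : π.first = ρ.last) : π.IsSubpath (ρ.append π) :=
  ⟨ρ.steps, [], by simp [append], h⟩

theorem append_assoc (ρ π θ : UPath N) : (ρ.append π).append θ = ρ.append (π.append θ) := by
  simp [append]

theorem InUnfN.unitSteps_posList {R : DBC N} {n : ℕ} (h : ρ.InUnfN R n) :
    UnitSteps ρ.posList := by
  obtain ⟨f, l⟩ := ρ
  rw [posList_eq_cons]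
  induction l generalizing f with
  | nil => exact List.isChain_singleton _
  | cons s l ih => exact List.isChain_cons_cons.2 ⟨h.1.abs_sub_le_one, ih s.2 h.2⟩

theorem posFinset_eq_Icc (h : UnitSteps ρ.posList) :
    ρ.posFinset = Finset.Icc (ρ.posFinset.min' ρ.posFinset_nonempty)
      (ρ.posFinset.max' ρ.posFinset_nonempty) :=
  h.toFinset_eq_Icc _

theorem extent_eq_of_posFinset_eq_Icc {a b : ℤ} (h : ρ.posFinset = Finset.Icc a b)
    (hab : a ≤ b) : ρ.extent = b - a := by
  have hmem : ∀ x, x ∈ ρ.posFinset ↔ a ≤ x ∧ x ≤ b := fun x => h ▸ Finset.mem_Icc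
  have hmax : ρ.posFinset.max' ρ.posFinset_nonempty = b :=
    le_antisymm (Finset.max'_le _ _ _ fun x hx => ((hmem x).1 hx).2)
      (Finset.le_max' _ _ ((hmem b).2 ⟨hab, le_rfl⟩))
  have hmin : ρ.posFinset.min' ρ.posFinset_nonempty = a :=
    le_antisymm (Finset.min'_le _ _ ((hmem a).2 ⟨le_rfl, hab⟩))
      (Finset.le_min' _ _ _ fun x hx => ((hmem x).1 hx).1)
  rw [extent, hmax, hmin]

theorem IsBasic.exists_interior (hb : ρ.IsBasic) (hadj : UnitSteps ρ.posList)
    (hne : ρ.steps ≠ []) (hvert : ρ.last.1 = ρ.first.1) :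
    ∃ I : List ℤ, UnitSteps I ∧ ρ.first.1 ∉ I ∧ ∀ x, x ∈ ρ.posList ↔ x = ρ.first.1 ∨ x ∈ I := by
  have hpos := posList_eq_of_steps_ne_nil hne
  refine ⟨ρ.steps.dropLast.map (·.2.1), hadj.of_isInfix ⟨[ρ.first.1], [ρ.last.1], ?_⟩, ?_, ?_⟩
  · rw [hpos]; simp
  · intro hM
    obtain ⟨s, hs, hsM⟩ := List.mem_map.1 hM
    exact hb s hs hsM
  · intro x
    rw [hpos, hvert]
    simp only [List.mem_cons, List.mem_append]
    tauto

theorem IsBasic.isLeftCorner (hb : ρ.IsBasic) (hadj : UnitSteps ρ.posList)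
    (hne : ρ.steps ≠ []) (hvert : ρ.last.1 = ρ.first.1) {k : ℤ} (hk : k ∈ ρ.posList)
    (hkM : k < ρ.first.1) : ρ.IsLeftCorner ∧ ρ.first.1 - k ≤ ρ.extent := by
  obtain ⟨I, hI, hMI, hmem⟩ := hb.exists_interior hadj hne hvert
  have hkI : k ∈ I := ((hmem k).1 hk).resolve_left hkM.ne
  have hmax : ρ.posFinset.max' ρ.posFinset_nonempty = ρ.first.1 := by
    refine le_antisymm (Finset.max'_le _ _ _ fun x hx => ?_)
      (Finset.le_max' _ _ (List.mem_toFinset.2 ρ.first_mem_posList))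
    rcases (hmem x).1 (List.mem_toFinset.1 hx) with rfl | hx
    · rfl
    · exact (hI.forall_lt_of_notMem hMI hkI hkM x hx).le
  have hmin : ρ.posFinset.min' ρ.posFinset_nonempty ≤ k :=
    Finset.min'_le _ _ (List.mem_toFinset.2 hk)
  have hIcc := posFinset_eq_Icc hadj
  rw [hmax] at hIcc
  refine ⟨⟨hne, hvert, (ρ.first.1 - ρ.posFinset.min' ρ.posFinset_nonempty).toNat, ?_⟩, ?_⟩
  · rwa [Int.toNat_of_nonneg (by omega), sub_sub_cancel]
  · rw [extent_eq_of_posFinset_eq_Icc hIcc (by omega)]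
    omega

theorem IsBasic.isRightCorner (hb : ρ.IsBasic) (hadj : UnitSteps ρ.posList)
    (hne : ρ.steps ≠ []) (hvert : ρ.last.1 = ρ.first.1) {k : ℤ} (hk : k ∈ ρ.posList)
    (hMk : ρ.first.1 < k) : ρ.IsRightCorner ∧ k - ρ.first.1 ≤ ρ.extent := by
  obtain ⟨I, hI, hMI, hmem⟩ := hb.exists_interior hadj hne hvert
  have hkI : k ∈ I := ((hmem k).1 hk).resolve_left hMk.ne'
  have hmin : ρ.posFinset.min' ρ.posFinset_nonempty = ρ.first.1 := by
    refine le_antisymm (Finset.min'_le _ _ (List.mem_toFinset.2 ρ.first_mem_posList))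
      (Finset.le_min' _ _ _ fun x hx => ?_)
    rcases (hmem x).1 (List.mem_toFinset.1 hx) with rfl | hx
    · rfl
    · exact (hI.forall_gt_of_notMem hMI hkI hMk x hx).le
  have hmax : k ≤ ρ.posFinset.max' ρ.posFinset_nonempty :=
    Finset.le_max' _ _ (List.mem_toFinset.2 hk)
  have hIcc := posFinset_eq_Icc hadj
  rw [hmin] at hIcc
  refine ⟨⟨hne, hvert, (ρ.posFinset.max' ρ.posFinset_nonempty - ρ.first.1).toNat, ?_⟩, ?_⟩
  · rwa [Int.toNat_of_nonneg (by omega), add_sub_cancel]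
  · rw [extent_eq_of_posFinset_eq_Icc hIcc (by omega)]
    omega

theorem exists_split_at_last_visit {M : ℤ} (h : M ∈ ρ.posList) :
    ∃ pre suf, ρ.steps = pre ++ suf ∧ (mk ρ.first pre).last.1 = M ∧ ∀ t ∈ suf, t.2.1 ≠ M := by
  by_cases hs : ∃ t ∈ ρ.steps, t.2.1 = M
  · obtain ⟨as, b, bs, hl, hb, hbs⟩ := List.exists_split_at_last_of_exists hs
    exact ⟨as ++ [b], bs, by simp [hl], by simp [last, hb], hbs⟩
  · refine ⟨[], ρ.steps, rfl, ?_, fun t ht h => hs ⟨t, ht, h⟩⟩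
    rw [posList_eq_cons] at h
    simp only [List.mem_cons, List.mem_map] at h
    exact h.resolve_right hs |>.symm

theorem exists_split_at_first_visit {M : ℤ} (h : M ∈ ρ.posList) (hM : M ≠ ρ.first.1) :
    ∃ pre s suf, ρ.steps = pre ++ s :: suf ∧ s.2.1 = M ∧ ∀ t ∈ pre, t.2.1 ≠ M := by
  rw [posList_eq_cons] at h
  simp only [List.mem_cons, List.mem_map] at h
  exact List.exists_split_at_first_of_exists (h.resolve_left hM)

theorem exists_basic_vertical_subpath (hj : θ.first = ξ₁.last) {M : ℤ}
    (h₁ : M ∈ ξ₁.posList) (h₂ : M ∈ θ.posList) (hM : M ≠ θ.first.1) :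
    ∃ θ' : UPath N, θ'.IsSubpath (ξ₁.append θ) ∧ θ'.steps ≠ [] ∧
      θ'.last.1 = θ'.first.1 ∧ θ'.first.1 = M ∧ θ'.IsBasic ∧ θ.first.1 ∈ θ'.posList := by
  obtain ⟨pre, A, hξ₁, hw, hA⟩ := exists_split_at_last_visit h₁
  obtain ⟨B, s, C, hθ, hs, hB⟩ := exists_split_at_first_visit h₂ hM
  set w := (mk ξ₁.first pre).last
  refine ⟨mk w (A ++ B ++ [s]), ⟨pre, C, by simp [append, hξ₁, hθ], rfl⟩, by simp, ?_, hw, ?_, ?_⟩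
  · simp [last, hs, hw]
  · intro t ht
    simp only [List.dropLast_concat, List.mem_append] at ht
    simp only [hw]
    exact ht.elim (hA t) (hB t)
  · have hk : θ.first = (mk w A).last := by
      have hξ₁' : ξ₁ = mk ξ₁.first (pre ++ A) := by rw [← hξ₁]
      rw [hj, hξ₁', last_mk_append]
    have hprefix : (mk w A).posList <+: (mk w (A ++ B ++ [s])).posList :=
      ⟨(B ++ [s]).map (·.2.1), by simp [posList_eq_cons]⟩
    exact hprefix.subset (hk ▸ last_mem_posList _)

theorem exists_isLBCorner_subpath (hj : θ.first = ξ₁.last)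
    (hadj : UnitSteps (ξ₁.append θ).posList) {M : ℤ} (h₁ : M ∈ ξ₁.posList)
    (h₂ : M ∈ θ.posList) (hfar : (N : ℤ) ^ 2 < |M - θ.first.1|) :
    ∃ θ' : UPath N, θ'.IsSubpath (ξ₁.append θ) ∧ θ'.IsLBCorner ∧ θ'.first.1 = M := by
  have hM : M ≠ θ.first.1 := by
    rintro rfl
    simp only [sub_self, abs_zero] at hfar
    nlinarith
  obtain ⟨θ', hsub, hne, hvert, rfl, hbasic, hk⟩ := exists_basic_vertical_subpath hj h₁ h₂ hM
  have hadj' := hadj.of_isInfix hsub.posList_infix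
  refine ⟨θ', hsub, ⟨?_, hbasic⟩, rfl⟩
  rcases lt_or_gt_of_ne hM with hlt | hgt
  · obtain ⟨hR, hextent⟩ := hbasic.isRightCorner hadj' hne hvert hk hlt
    exact ⟨Or.inl hR, by rw [abs_of_neg (by omega)] at hfar; omega⟩
  · obtain ⟨hL, hextent⟩ := hbasic.isLeftCorner hadj' hne hvert hk hgt
    exact ⟨Or.inr hL, by rw [abs_of_pos (by omega)] at hfar; omega⟩

theorem abs_sub_first_le_of_forall_isLBCorner_eq (hj : θ.first = ξ₁.last)
    (hadj : UnitSteps (ξ₁.append θ).posList)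
    (hfirst : ∀ θ' : UPath N, θ'.IsSubpath (ξ₁.append θ) → θ'.IsLBCorner → θ' = θ)
    {M : ℤ} (h₁ : M ∈ ξ₁.posList) (h₂ : M ∈ θ.posList) : |M - θ.first.1| ≤ (N : ℤ) ^ 2 := by
  by_contra! hfar
  obtain ⟨θ', hsub, hlb, rfl⟩ := exists_isLBCorner_subpath hj hadj h₁ h₂ hfar
  rw [hfirst θ' hsub hlb, sub_self, abs_zero] at hfar
  nlinarith

theorem extent_le_of_isRightCorner (hj : θ.first = ξ₁.last)
    (hadj : UnitSteps (ξ₁.append θ).posList)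
    (hfirst : ∀ θ' : UPath N, θ'.IsSubpath (ξ₁.append θ) → θ'.IsLBCorner → θ' = θ)
    (hR : θ.IsRightCorner) (hbelow : ∀ x ∈ θ.posList, x ≤ ξ₁.first.1) :
    θ.extent ≤ (N : ℤ) ^ 2 := by
  obtain ⟨-, -, d, hpos⟩ := hR
  have hM : θ.first.1 + d ∈ θ.posList := by
    rw [← List.mem_toFinset, ← posFinset, hpos]
    exact Finset.mem_Icc.2 ⟨by omega, le_rfl⟩
  have hadj₁ := hadj.of_isInfix (isSubpath_append_left ξ₁ θ).posList_infix
  have hM₁ : θ.first.1 + d ∈ ξ₁.posList :=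
    hadj₁.mem_of_le_of_le (hj ▸ ξ₁.last_mem_posList) ξ₁.first_mem_posList (by omega)
      (hbelow _ hM)
  have hd := abs_sub_first_le_of_forall_isLBCorner_eq hj hadj hfirst hM₁ hM
  rw [add_sub_cancel_left, abs_of_nonneg (by omega)] at hd
  rwa [extent_eq_of_posFinset_eq_Icc hpos (by omega), add_sub_cancel_left]

theorem extent_le_of_isLeftCorner (hj : θ.first = ξ₁.last)
    (hadj : UnitSteps (ξ₁.append θ).posList)
    (hfirst : ∀ θ' : UPath N, θ'.IsSubpath (ξ₁.append θ) → θ'.IsLBCorner → θ' = θ)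
    (hL : θ.IsLeftCorner) (habove : ∀ x ∈ θ.posList, ξ₁.first.1 ≤ x) :
    θ.extent ≤ (N : ℤ) ^ 2 := by
  obtain ⟨-, -, d, hpos⟩ := hL
  have hM : θ.first.1 - d ∈ θ.posList := by
    rw [← List.mem_toFinset, ← posFinset, hpos]
    exact Finset.mem_Icc.2 ⟨le_rfl, by omega⟩
  have hadj₁ := hadj.of_isInfix (isSubpath_append_left ξ₁ θ).posList_infix
  have hM₁ : θ.first.1 - d ∈ ξ₁.posList :=
    hadj₁.mem_of_le_of_le ξ₁.first_mem_posList (hj ▸ ξ₁.last_mem_posList) (habove _ hM)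
      (by omega)
  have hd := abs_sub_first_le_of_forall_isLBCorner_eq hj hadj hfirst hM₁ hM
  rw [sub_sub_cancel_left, abs_neg, abs_of_nonneg (by omega)] at hd
  rwa [extent_eq_of_posFinset_eq_Icc hpos (by omega), sub_sub_cancel]

end UPath

namespace IsSegmentOf

variable {ρ ξ : UPath N} {p q : ℤ}

theorem isSubpath (h : IsSegmentOf ρ p q ξ) : ξ.IsSubpath ρ := by
  obtain ⟨-, pre, post, hsteps, hfirst, -⟩ := h
  exact ⟨pre, post, hsteps, hfirst⟩

theorem posFinset_subset (h : IsSegmentOf ρ p q ξ) : ξ.posFinset ⊆ Finset.Icc p q := by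
  obtain ⟨-, -, -, -, -, hsub, -⟩ := h
  exact hsub

theorem first_eq_or_eq {n : ℕ} (h : IsSegmentOf ρ p q ξ) (hadj : UnitSteps ρ.posList)
    (hext : ρ.IsExtremalIn n) (hp : 0 ≤ p) (hq : q ≤ n) :
    ξ.first.1 = p ∨ ξ.first.1 = q := by
  have hin := Finset.mem_Icc.1 (h.posFinset_subset (List.mem_toFinset.2 ξ.first_mem_posList))
  obtain ⟨-, pre, post, hsteps, hfirst, -, hpre, -⟩ := h
  rcases List.eq_nil_or_concat pre with rfl | ⟨pre, s, rfl⟩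
  · have hρ : ξ.first = ρ.first := hfirst
    rw [hρ] at hin ⊢
    rcases hext.1 with h | h <;> omega
  · simp only [List.concat_eq_append] at hsteps hfirst hpre
    set u := (UPath.mk ρ.first pre).last
    have hs : ξ.first = s.2 := by rw [hfirst]; simp [UPath.last]
    have hedge : (UPath.mk u [s]).IsSubpath ρ := ⟨pre, ξ.steps ++ post, by simp [hsteps], rfl⟩
    have hstep : UnitSteps [u.1, s.2.1] := hadj.of_isInfix hedge.posList_infix
    have hu := abs_le.1 ((List.isChain_pair (R := fun a b : ℤ => |a - b| ≤ 1)).1 hstep)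
    have hout : ¬ StepInRange p q u s.2 := hpre pre s.1 s.2 rfl
    simp only [StepInRange] at hout
    rw [hs] at hin ⊢
    omega

end IsSegmentOf

theorem statement7_general (N : ℕ) (R : DBC N)
    (n : ℕ) (p q : ℤ) (hp : 0 ≤ p) (hq : q ≤ (n : ℤ))
    (ρ : UPath N) (hρ : ρ.InUnfN R n) (hext : ρ.IsExtremalIn n)
    (ξ : UPath N) (hseg : IsSegmentOf ρ p q ξ)
    (θ ξ₁ ξ₂ : UPath N)
    (hdec : ξ = ξ₁.append (θ.append ξ₂))
    (h1 : θ.first = ξ₁.last)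
    (hθ : θ.IsLBCorner)
    (hfirst : ∀ θ' : UPath N, θ'.IsSubpath (ξ₁.append θ) → θ'.IsLBCorner → θ' = θ) :
    (θ.IsRightCorner ↔ ξ.first.1 = p) ∧ (θ.IsLeftCorner ↔ ξ.first.1 = q) := by
  obtain ⟨⟨hcorner, hlong⟩, -⟩ := hθ
  have hadjρ := hρ.unitSteps_posList
  have hstart := hseg.first_eq_or_eq hadjρ hext hp hq
  have hζ : (ξ₁.append θ).posList <:+: ξ.posList := by
    rw [hdec, ← UPath.append_assoc]
    exact (UPath.isSubpath_append_left _ _).posList_infix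
  have hadj := hadjρ.of_isInfix (hζ.trans hseg.isSubpath.posList_infix)
  have hθξ : ∀ x ∈ θ.posList, p ≤ x ∧ x ≤ q := fun x hx =>
    Finset.mem_Icc.1 <| hseg.posFinset_subset <| List.mem_toFinset.2 <|
      hζ.subset ((UPath.isSubpath_append_right h1).posList_infix.subset hx)
  have hξ₁ : ξ₁.first = ξ.first := by rw [hdec]; rfl
  have not_right : ξ.first.1 = q → ¬ θ.IsRightCorner := fun hξq hR =>
    (UPath.extent_le_of_isRightCorner h1 hadj hfirst hR fun x hx =>
      hξ₁ ▸ hξq ▸ (hθξ x hx).2).not_gt hlong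
  have not_left : ξ.first.1 = p → ¬ θ.IsLeftCorner := fun hξp hL =>
    (UPath.extent_le_of_isLeftCorner h1 hadj hfirst hL fun x hx =>
      hξ₁ ▸ hξp ▸ (hθξ x hx).1).not_gt hlong
  unfold UPath.IsCorner at hcorner
  tauto

/-- The first lb-corner of a segment `ξ ∈ segments(ρ,p,q)` is a
right corner iff `ξ` starts at position `p`, and a left corner iff `ξ` starts at
position `q`. -/
theorem statement7 (N : ℕ) (hN : 1 ≤ N) (R : DBC N) (hbal : R.Balanced)
    (n : ℕ) (hn : 1 ≤ n) (p q : ℤ) (hp : 0 ≤ p) (hpq : p ≤ q) (hq : q ≤ (n : ℤ))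
    (ρ : UPath N) (hρ : ρ.InUnfN R n) (hext : ρ.IsExtremalIn n)
    (ξ : UPath N) (hseg : IsSegmentOf ρ p q ξ)
    (θ ξ₁ ξ₂ : UPath N)
    (hdec : ξ = ξ₁.append (θ.append ξ₂))
    (h1 : θ.first = ξ₁.last) (h2 : ξ₂.first = θ.last)
    (hθ : θ.IsLBCorner)
    (hfirst : ∀ θ' : UPath N, θ'.IsSubpath (ξ₁.append θ) → θ'.IsLBCorner → θ' = θ) :
    (θ.IsRightCorner ↔ ξ.first.1 = p) ∧ (θ.IsLeftCorner ↔ ξ.first.1 = q) :=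
  statement7_general N R n p q hp hq ρ hρ hext ξ hseg θ ξ₁ ξ₂ hdec h1 hθ hfirst
end
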